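/- arXiv:0710.3183 — 8 statements merged into one kernel-verified Lean document; each statement's English description precedes it below -/
import Mathlib

section
/- Let φ : [0,1] → ℝ be bounded, convex, and differentiable on (0,1). Then the limits lim_{p→0} φ(p) and lim_{p→1} φ(p) exist and are finite, the limits lim_{p→0} φ'(p) and lim_{p→1} φ'(p) exist in the extended reals (possibly -∞ at 0 and +∞ at 1), and moreover lim_{p→0} p·φ'(p) = 0 and lim_{p→1} (1-p)·φ'(p) = 0. -/
open Set Filter Topology

/-!
Subtracting the tangent line at an interior point `c` leaves a function that is antitone on
`(0, c)`, so boundedness gives the limit of `φ` at `0`; `φ'` is monotone, hence has a limit in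
the extended reals. Since the tangent at `p` lies below the graph at `p/2` and at `2p`,
`2 (φ p - φ (p/2)) ≤ p φ' p ≤ φ (2p) - φ p`, and both bounds tend to `0`.
The endpoint `1` is reduced to the endpoint `0` by the reflection `x ↦ -x`.
-/

theorem ConvexOn.comp_neg {E : Type*} [AddCommGroup E] [Module ℝ E] {s : Set E} {f : E → ℝ}
    (hf : ConvexOn ℝ s f) : ConvexOn ℝ (-s) (fun x => f (-x)) :=
  hf.comp_linearMap (-LinearMap.id)

theorem HasDerivAt.comp_neg {f : ℝ → ℝ} {f' x : ℝ} (h : HasDerivAt f f' (-x)) :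
    HasDerivAt (fun y => f (-y)) (-f') x := by
  simpa [Function.comp_def] using h.comp x (hasDerivAt_neg x)

theorem tendsto_add_mul_sub_nhdsGT {a c : ℝ} (hc : 0 < c) :
    Tendsto (fun x => a + c * (x - a)) (𝓝[>] a) (𝓝[>] a) := by
  refine tendsto_nhdsWithin_of_tendsto_nhds_of_eventually_within _ ?_ ?_
  · exact (Continuous.tendsto' (by fun_prop) a a (by simp)).mono_left nhdsWithin_le_nhds
  · filter_upwards [self_mem_nhdsWithin] with x (hx : a < x)
    have : 0 < c * (x - a) := mul_pos hc (sub_pos.2 hx)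
    simp only [mem_Ioi]
    linarith

section MonotoneOn

variable {g : ℝ → ℝ} {a b : ℝ}

theorem MonotoneOn.exists_tendsto_ereal_nhdsGT (hg : MonotoneOn g (Ioo a b)) (hab : a < b) :
    ∃ L : EReal, L ≠ ⊤ ∧ Tendsto (fun x => (g x : EReal)) (𝓝[>] a) (𝓝 L) := by
  obtain ⟨c, hc⟩ := nonempty_Ioo.2 hab
  have hgE := EReal.coe_strictMono.monotone.comp_monotoneOn hg
  refine ⟨_, ?_, hgE.tendsto_nhdsWithin_Ioo_right ⟨c, hc⟩ (OrderBot.bddBelow _)⟩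
  exact ne_top_of_le_ne_top (EReal.coe_ne_top (g c)) (sInf_le (mem_image_of_mem _ hc))

theorem MonotoneOn.exists_tendsto_ereal_nhdsLT (hg : MonotoneOn g (Ioo a b)) (hab : a < b) :
    ∃ L : EReal, L ≠ ⊥ ∧ Tendsto (fun x => (g x : EReal)) (𝓝[<] b) (𝓝 L) := by
  obtain ⟨c, hc⟩ := nonempty_Ioo.2 hab
  have hgE := EReal.coe_strictMono.monotone.comp_monotoneOn hg
  refine ⟨_, ?_, hgE.tendsto_nhdsWithin_Ioo_left ⟨c, hc⟩ (OrderTop.bddAbove _)⟩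
  exact ne_bot_of_le_ne_bot (EReal.coe_ne_bot (g c)) (le_sSup (mem_image_of_mem _ hc))

end MonotoneOn

namespace ConvexOn

variable {f f' : ℝ → ℝ} {a b : ℝ}

theorem monotoneOn_of_hasDerivAt {S : Set ℝ} (hf : ConvexOn ℝ S f)
    (hd : ∀ x ∈ S, HasDerivAt f (f' x) x) : MonotoneOn f' S := by
  intro x hx y hy hxy
  have := hf.monotoneOn_deriv (fun z hz => (hd z hz).differentiableAt) hx hy hxy
  rwa [(hd x hx).deriv, (hd y hy).deriv] at this

theorem add_mul_sub_le_of_hasDerivAt {S : Set ℝ} (hf : ConvexOn ℝ S f) {x y : ℝ}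
    (hx : x ∈ S) (hy : y ∈ S) (hd : HasDerivAt f (f' x) x) : f x + f' x * (y - x) ≤ f y := by
  rcases lt_trichotomy x y with hlt | rfl | hgt
  · have := hf.le_slope_of_hasDerivAt hx hy hlt hd
    rw [slope_def_field, le_div_iff₀ (sub_pos.2 hlt)] at this
    linarith
  · simp
  · have := hf.slope_le_of_hasDerivAt hy hx hgt hd
    rw [slope_def_field, div_le_iff₀ (sub_pos.2 hgt)] at this
    linarith

theorem exists_tendsto_nhdsGT (hf : ConvexOn ℝ (Ioo a b) f)
    (hd : ∀ x ∈ Ioo a b, HasDerivAt f (f' x) x) (hab : a < b) {M : ℝ}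
    (hM : ∀ x ∈ Ioo a b, f x ≤ M) : ∃ l, Tendsto f (𝓝[>] a) (𝓝 l) := by
  obtain ⟨c, hc⟩ := nonempty_Ioo.2 hab
  have hsub : Ioo a c ⊆ Ioo a b := Ioo_subset_Ioo_right hc.2.le
  set g := fun x => f x - f' c * x
  have hanti : AntitoneOn g (Ioo a c) := by
    intro x hx y hy hxy
    have htan := hf.add_mul_sub_le_of_hasDerivAt (hsub hy) (hsub hx) (hd y (hsub hy))
    have hmono := hf.monotoneOn_of_hasDerivAt hd (hsub hy) hc hy.2.le
    simp only [g]
    nlinarith [mul_nonneg (sub_nonneg.2 hmono) (sub_nonneg.2 hxy)]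
  have hbdd : BddAbove (g '' Ioo a c) := by
    refine ⟨M + |f' c| * (|a| + |c|), ?_⟩
    rintro _ ⟨x, hx, rfl⟩
    have hx_abs : |x| ≤ |a| + |c| := abs_le.2
      ⟨by linarith [neg_abs_le a, abs_nonneg c, hx.1],
        by linarith [le_abs_self c, abs_nonneg a, hx.2]⟩
    have : -(f' c * x) ≤ |f' c| * (|a| + |c|) :=
      calc -(f' c * x) ≤ |f' c| * |x| := (neg_le_abs _).trans (abs_mul _ _).le
        _ ≤ |f' c| * (|a| + |c|) := mul_le_mul_of_nonneg_left hx_abs (abs_nonneg _)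
    simp only [g]
    linarith [hM x (hsub hx)]
  have hlin : Tendsto (fun x => f' c * x) (𝓝[>] a) (𝓝 (f' c * a)) :=
    ((continuous_const_mul _).tendsto a).mono_left nhdsWithin_le_nhds
  have hg := hanti.tendsto_nhdsWithin_Ioo_right (nonempty_Ioo.2 hc.1) hbdd
  exact ⟨_, by simpa [g] using hg.add hlin⟩

theorem exists_tendsto_nhdsLT (hf : ConvexOn ℝ (Ioo a b) f)
    (hd : ∀ x ∈ Ioo a b, HasDerivAt f (f' x) x) (hab : a < b) {M : ℝ}
    (hM : ∀ x ∈ Ioo a b, f x ≤ M) : ∃ l, Tendsto f (𝓝[<] b) (𝓝 l) := by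
  have hf' := hf.comp_neg
  have hd' : ∀ x ∈ -Ioo a b, HasDerivAt (fun y => f (-y)) (-f' (-x)) x :=
    fun x hx => (hd (-x) hx).comp_neg
  rw [neg_Ioo] at hf' hd'
  obtain ⟨l, hl⟩ := hf'.exists_tendsto_nhdsGT hd' (neg_lt_neg hab)
    (fun x hx => hM (-x) (by rwa [← neg_Ioo] at hx))
  exact ⟨l, by simpa [Function.comp_def] using hl.comp tendsto_neg_nhdsLT⟩

theorem tendsto_sub_mul_nhdsGT (hf : ConvexOn ℝ (Ioo a b) f)
    (hd : ∀ x ∈ Ioo a b, HasDerivAt f (f' x) x) (hab : a < b) {l : ℝ}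
    (hl : Tendsto f (𝓝[>] a) (𝓝 l)) :
    Tendsto (fun x => (x - a) * f' x) (𝓝[>] a) (𝓝 0) := by
  have hlower : Tendsto (fun x => 2 * (f x - f (a + 1 / 2 * (x - a)))) (𝓝[>] a) (𝓝 0) := by
    simpa using (hl.sub (hl.comp (tendsto_add_mul_sub_nhdsGT one_half_pos))).const_mul 2
  have hupper : Tendsto (fun x => f (a + 2 * (x - a)) - f x) (𝓝[>] a) (𝓝 0) := by
    simpa using (hl.comp (tendsto_add_mul_sub_nhdsGT two_pos)).sub hl
  have hnear : ∀ᶠ x in 𝓝[>] a, x ∈ Ioo a (a + (b - a) / 2) :=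
    Ioo_mem_nhdsGT (by linarith)
  refine tendsto_of_tendsto_of_tendsto_of_le_of_le' hlower hupper ?_ ?_
  · filter_upwards [hnear] with x ⟨hax, hxb⟩
    have := hf.add_mul_sub_le_of_hasDerivAt (y := a + 1 / 2 * (x - a)) ⟨hax, by linarith⟩
      ⟨by linarith, by linarith⟩ (hd x ⟨hax, by linarith⟩)
    linarith
  · filter_upwards [hnear] with x ⟨hax, hxb⟩
    have := hf.add_mul_sub_le_of_hasDerivAt (y := a + 2 * (x - a)) ⟨hax, by linarith⟩
      ⟨by linarith, by linarith⟩ (hd x ⟨hax, by linarith⟩)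
    linarith

theorem tendsto_sub_mul_nhdsLT (hf : ConvexOn ℝ (Ioo a b) f)
    (hd : ∀ x ∈ Ioo a b, HasDerivAt f (f' x) x) (hab : a < b) {l : ℝ}
    (hl : Tendsto f (𝓝[<] b) (𝓝 l)) :
    Tendsto (fun x => (b - x) * f' x) (𝓝[<] b) (𝓝 0) := by
  have hf' := hf.comp_neg
  have hd' : ∀ x ∈ -Ioo a b, HasDerivAt (fun y => f (-y)) (-f' (-x)) x :=
    fun x hx => (hd (-x) hx).comp_neg
  rw [neg_Ioo] at hf' hd'
  have hl' : Tendsto (fun x => f (-x)) (𝓝[>] (-b)) (𝓝 l) := by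
    simpa [Function.comp_def] using hl.comp tendsto_neg_nhdsGT_neg
  have := (hf'.tendsto_sub_mul_nhdsGT hd' (neg_lt_neg hab) hl').comp tendsto_neg_nhdsLT
  simpa [Function.comp_def, neg_add_eq_sub] using this.neg

end ConvexOn

/-- A bounded convex function on `[0,1]`, differentiable on `(0,1)`, has
(finite) limits at the endpoints; its derivative has limits in the extended
reals at the endpoints (possibly `-∞` at `0`, `+∞` at `1`); and
`p·φ'(p) → 0` as `p → 0⁺` and `(1-p)·φ'(p) → 0` as `p → 1⁻`. -/
theorem stmt_5 (φ φ' : ℝ → ℝ)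
    (hbdd : ∃ M : ℝ, ∀ x ∈ Icc (0:ℝ) 1, |φ x| ≤ M)
    (hconv : ConvexOn ℝ (Icc (0:ℝ) 1) φ)
    (hderiv : ∀ x ∈ Ioo (0:ℝ) 1, HasDerivAt φ (φ' x) x) :
    (∃ a : ℝ, Tendsto φ (𝓝[>] (0:ℝ)) (𝓝 a)) ∧
    (∃ b : ℝ, Tendsto φ (𝓝[<] (1:ℝ)) (𝓝 b)) ∧
    (∃ L : EReal, L ≠ ⊤ ∧ Tendsto (fun p => (φ' p : EReal)) (𝓝[>] (0:ℝ)) (𝓝 L)) ∧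
    (∃ L : EReal, L ≠ ⊥ ∧ Tendsto (fun p => (φ' p : EReal)) (𝓝[<] (1:ℝ)) (𝓝 L)) ∧
    Tendsto (fun p => p * φ' p) (𝓝[>] (0:ℝ)) (𝓝 0) ∧
    Tendsto (fun p => (1 - p) * φ' p) (𝓝[<] (1:ℝ)) (𝓝 0) := by
  obtain ⟨M, hM⟩ := hbdd
  have hconv' : ConvexOn ℝ (Ioo (0:ℝ) 1) φ := hconv.subset Ioo_subset_Icc_self (convex_Ioo 0 1)
  have hle : ∀ x ∈ Ioo (0:ℝ) 1, φ x ≤ M :=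
    fun x hx => (le_abs_self _).trans (hM x (Ioo_subset_Icc_self hx))
  have hmono := hconv'.monotoneOn_of_hasDerivAt hderiv
  obtain ⟨a, ha⟩ := hconv'.exists_tendsto_nhdsGT hderiv one_pos hle
  obtain ⟨b, hb⟩ := hconv'.exists_tendsto_nhdsLT hderiv one_pos hle
  exact ⟨⟨a, ha⟩, ⟨b, hb⟩, hmono.exists_tendsto_ereal_nhdsGT one_pos,
    hmono.exists_tendsto_ereal_nhdsLT one_pos,
    by simpa using hconv'.tendsto_sub_mul_nhdsGT hderiv one_pos ha,
    hconv'.tendsto_sub_mul_nhdsLT hderiv one_pos hb⟩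
end

section
/- If s is a proper scoring rule, then the function φ : (0,1) → ℝ defined by φ(x) = -x·s(1,x) - (1-x)·s(0,x) is strictly convex. -/
open Set

/-- For a proper scoring rule `s`, the function
`φ(x) = -x·s(1,x) - (1-x)·s(0,x)` is strictly convex on `(0,1)`. -/
theorem stmt_6 (s : Fin 2 → ℝ → ENNReal)
    (hproper : ∀ p ∈ Icc (0:ℝ) 1, ∀ x ∈ Icc (0:ℝ) 1, x ≠ p →
      ENNReal.ofReal p * s 1 p + ENNReal.ofReal (1 - p) * s 0 p <
      ENNReal.ofReal p * s 1 x + ENNReal.ofReal (1 - p) * s 0 x)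
    (hcont : ∀ i : Fin 2, ContinuousOn (s i) (Icc (0:ℝ) 1)) :
    StrictConvexOn ℝ (Ioo (0:ℝ) 1)
      (fun x => -(x * (s 1 x).toReal) - (1 - x) * (s 0 x).toReal) := by
  have hfin : ∀ z ∈ Ioo (0:ℝ) 1, s 1 z ≠ ⊤ ∧ s 0 z ≠ ⊤ := by
    intro z hz
    have h := hproper z ⟨hz.1.le, hz.2.le⟩ 0 ⟨le_refl 0, zero_le_one⟩ hz.1.ne
    have htop := ne_top_of_lt h
    rw [ENNReal.add_ne_top] at htop
    have hz0 : ENNReal.ofReal z ≠ 0 := (ENNReal.ofReal_pos.mpr hz.1).ne'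
    have hz1 : ENNReal.ofReal (1 - z) ≠ 0 :=
      (ENNReal.ofReal_pos.mpr (by linarith [hz.2])).ne'
    constructor
    · intro hT
      exact htop.1 (by rw [hT, ENNReal.mul_top hz0])
    · intro hT
      exact htop.2 (by rw [hT, ENNReal.mul_top hz1])
  have key : ∀ z ∈ Ioo (0:ℝ) 1, ∀ q ∈ Ioo (0:ℝ) 1, q ≠ z →
      z * (s 1 z).toReal + (1 - z) * (s 0 z).toReal <
      z * (s 1 q).toReal + (1 - z) * (s 0 q).toReal := by
    intro z hz q hq hqz
    have h := hproper z ⟨hz.1.le, hz.2.le⟩ q ⟨hq.1.le, hq.2.le⟩ hqz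
    obtain ⟨h1q, h0q⟩ := hfin q hq
    have hz0 : (0:ℝ) ≤ z := hz.1.le
    have hz1 : (0:ℝ) ≤ 1 - z := by linarith [hz.2]
    have hRtop : ENNReal.ofReal z * s 1 q + ENNReal.ofReal (1 - z) * s 0 q ≠ ⊤ := by
      rw [ENNReal.add_ne_top]
      exact ⟨ENNReal.mul_ne_top ENNReal.ofReal_ne_top h1q,
        ENNReal.mul_ne_top ENNReal.ofReal_ne_top h0q⟩
    have h' := ENNReal.toReal_strict_mono hRtop h
    rwa [ENNReal.toReal_add (ne_top_of_lt h |> fun ht =>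
        (ENNReal.add_ne_top.mp ht).1) (ne_top_of_lt h |> fun ht =>
        (ENNReal.add_ne_top.mp ht).2),
      ENNReal.toReal_add (ENNReal.add_ne_top.mp hRtop).1 (ENNReal.add_ne_top.mp hRtop).2,
      ENNReal.toReal_mul, ENNReal.toReal_mul, ENNReal.toReal_mul, ENNReal.toReal_mul,
      ENNReal.toReal_ofReal hz0, ENNReal.toReal_ofReal hz1] at h'
  refine ⟨convex_Ioo 0 1, ?_⟩
  intro x hx y hy hxy a b ha hb hab
  have hpI : a • x + b • y ∈ Ioo (0:ℝ) 1 :=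
    (convex_Ioo (0:ℝ) 1) hx hy ha.le hb.le hab
  simp only [smul_eq_mul] at hpI ⊢
  have hpx : a * x + b * y ≠ x := by
    intro h
    apply hxy
    have hb' : b * (y - x) = 0 := by linear_combination h - x * hab
    rcases mul_eq_zero.mp hb' with h | h
    · exact absurd h hb.ne'
    · linarith
  have hpy : a * x + b * y ≠ y := by
    intro h
    apply hxy
    have ha' : a * (x - y) = 0 := by linear_combination h - y * hab
    rcases mul_eq_zero.mp ha' with h | h
    · exact absurd h ha.ne'
    · linarith
  have hx' := key x hx (a * x + b * y) hpI hpx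
  have hy' := key y hy (a * x + b * y) hpI hpy
  set A := (s 1 (a * x + b * y)).toReal with hA
  set B := (s 0 (a * x + b * y)).toReal with hB
  have e0 : (a * x + b * y) * A = a * (x * A) + b * (y * A) := by ring
  have e1 : (1 - (a * x + b * y)) * B = a * ((1 - x) * B) + b * ((1 - y) * B) := by
    linear_combination (-B) * hab
  nlinarith [mul_lt_mul_of_pos_left hx' ha, mul_lt_mul_of_pos_left hy' hb, e0, e1]
end

section
/- If s is a proper scoring rule, then the function φ(x) = -x·s(1,x) - (1-x)·s(0,x) is differentiable on (0,1) with derivative φ'(x) = s(0,x) - s(1,x), and consequently s satisfies the Savage representation s(i,x) = -φ(x) - φ'(x)·(i - x) for all x ∈ (0,1) and i ∈ {0,1}. -/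
open Set Filter

/-- Savage representation: for a proper scoring rule `s`, the function
`φ(x) = -x·s(1,x) - (1-x)·s(0,x)` is differentiable on `(0,1)` with
`φ'(x) = s(0,x) - s(1,x)`, and `s(i,x) = -φ(x) - φ'(x)·(i-x)` for `i ∈ {0,1}`. -/
theorem stmt_8 (s : Fin 2 → ℝ → ENNReal)
    (hproper : ∀ p ∈ Icc (0:ℝ) 1, ∀ x ∈ Icc (0:ℝ) 1, x ≠ p →
      ENNReal.ofReal p * s 1 p + ENNReal.ofReal (1 - p) * s 0 p <
      ENNReal.ofReal p * s 1 x + ENNReal.ofReal (1 - p) * s 0 x)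
    (hcont : ∀ i : Fin 2, ContinuousOn (s i) (Icc (0:ℝ) 1))
    (hfin : ∀ i : Fin 2, ∀ x ∈ Ioo (0:ℝ) 1, s i x ≠ ⊤) :
    ∀ x ∈ Ioo (0:ℝ) 1,
      HasDerivAt (fun y => -(y * (s 1 y).toReal) - (1 - y) * (s 0 y).toReal)
        ((s 0 x).toReal - (s 1 x).toReal) x ∧
      ∀ i : Fin 2, (s i x).toReal =
        -((-(x * (s 1 x).toReal) - (1 - x) * (s 0 x).toReal))
          - ((s 0 x).toReal - (s 1 x).toReal) * ((i : ℝ) - x) := by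
  intro x hx
  set f : Fin 2 → ℝ → ℝ := fun i y => (s i y).toReal with hf
  -- the key real-valued properness inequality
  have key : ∀ p ∈ Ioo (0:ℝ) 1, ∀ z ∈ Ioo (0:ℝ) 1,
      p * f 1 p + (1-p) * f 0 p ≤ p * f 1 z + (1-p) * f 0 z := by
    intro p hp z hz
    rcases eq_or_ne z p with rfl | hzp
    · exact le_refl _
    · have h := (hproper p (Ioo_subset_Icc_self hp) z (Ioo_subset_Icc_self hz) hzp).le
      have hp0 : (0:ℝ) ≤ p := hp.1.le
      have hp1 : (0:ℝ) ≤ 1 - p := by linarith [hp.2]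
      have m1z : ENNReal.ofReal p * s 1 z ≠ ⊤ :=
        ENNReal.mul_ne_top ENNReal.ofReal_ne_top (hfin 1 z hz)
      have m0z : ENNReal.ofReal (1-p) * s 0 z ≠ ⊤ :=
        ENNReal.mul_ne_top ENNReal.ofReal_ne_top (hfin 0 z hz)
      have m1p : ENNReal.ofReal p * s 1 p ≠ ⊤ :=
        ENNReal.mul_ne_top ENNReal.ofReal_ne_top (hfin 1 p hp)
      have m0p : ENNReal.ofReal (1-p) * s 0 p ≠ ⊤ :=
        ENNReal.mul_ne_top ENNReal.ofReal_ne_top (hfin 0 p hp)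
      have hne : ENNReal.ofReal p * s 1 z + ENNReal.ofReal (1-p) * s 0 z ≠ ⊤ :=
        ENNReal.add_ne_top.mpr ⟨m1z, m0z⟩
      have h2 := ENNReal.toReal_mono hne h
      rw [ENNReal.toReal_add m1p m0p, ENNReal.toReal_add m1z m0z,
        ENNReal.toReal_mul, ENNReal.toReal_mul, ENNReal.toReal_mul, ENNReal.toReal_mul,
        ENNReal.toReal_ofReal hp0, ENNReal.toReal_ofReal hp1] at h2
      exact h2
  set ψ : ℝ → ℝ := fun y => y * f 1 y + (1-y) * f 0 y with hψdef
  set A : ℝ → ℝ := fun y => f 1 y - f 0 y with hAdef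
  -- continuity of A at x
  have hIcc : Icc (0:ℝ) 1 ∈ nhds x := Icc_mem_nhds hx.1 hx.2
  have hnw : nhdsWithin x (Icc (0:ℝ) 1) = nhds x := nhdsWithin_eq_nhds.mpr hIcc
  have hfi : ∀ i : Fin 2, Tendsto (f i) (nhds x) (nhds (f i x)) := by
    intro i
    have hs : Tendsto (s i) (nhds x) (nhds (s i x)) := by
      have := (hcont i) x (Ioo_subset_Icc_self hx)
      rwa [ContinuousWithinAt, hnw] at this
    exact (ENNReal.tendsto_toReal (hfin i x hx)).comp hs
  have hA : Tendsto A (nhds x) (nhds (A x)) := (hfi 1).sub (hfi 0)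
  -- the derivative of ψ
  have hψ : HasDerivAt ψ (A x) x := by
    rw [hasDerivAt_iff_tendsto_slope, tendsto_iff_dist_tendsto_zero]
    have hev : ∀ᶠ p in nhdsWithin x ({x}ᶜ), p ∈ Ioo (0:ℝ) 1 ∧ p ≠ x := by
      filter_upwards [mem_nhdsWithin_of_mem_nhds (Ioo_mem_nhds hx.1 hx.2),
        self_mem_nhdsWithin] with p h1 h2
      exact ⟨h1, h2⟩
    apply squeeze_zero' (f := fun p => dist (slope ψ x p) (A x))
      (g := fun p => |A p - A x|)
      (Eventually.of_forall fun p => dist_nonneg)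
    · filter_upwards [hev] with p ⟨hp, hpx⟩
      have hq : p - x ≠ 0 := sub_ne_zero.mpr hpx
      have k1 := key p hp x hx
      have k2 := key x hx p hp
      have h1 : (p - x) * A p ≤ ψ p - ψ x := by
        simp only [hψdef, hAdef]; nlinarith [k2]
      have h2 : ψ p - ψ x ≤ (p - x) * A x := by
        simp only [hψdef, hAdef]; nlinarith [k1]
      have hslope : slope ψ x p = (ψ p - ψ x) / (p - x) := by
        rw [slope_def_field]
      have habs : |(ψ p - ψ x) / (p - x) - A x| ≤ |A p - A x| := by
        have b1 := le_abs_self (A p - A x)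
        have b2 := neg_abs_le (A p - A x)
        rcases lt_or_gt_of_ne hq with hqn | hqp
        · have hs1 : (ψ p - ψ x) / (p - x) ≤ A p := by
            rw [div_le_iff_of_neg hqn]; linarith [h1]
          have hs2 : A x ≤ (ψ p - ψ x) / (p - x) := by
            rw [le_div_iff_of_neg hqn]; linarith [h2]
          set d := (ψ p - ψ x) / (p - x) with hd
          clear_value d
          rw [abs_le]; constructor <;> linarith [abs_nonneg (A p - A x)]
        · have hs1 : A p ≤ (ψ p - ψ x) / (p - x) := by
            rw [le_div_iff₀ hqp]; linarith [h1]
          have hs2 : (ψ p - ψ x) / (p - x) ≤ A x := by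
            rw [div_le_iff₀ hqp]; linarith [h2]
          set d := (ψ p - ψ x) / (p - x) with hd
          clear_value d
          rw [abs_le]; constructor <;> linarith [abs_nonneg (A p - A x)]
      rw [Real.dist_eq, hslope]
      exact habs
    · have : Tendsto (fun p => dist (A p) (A x)) (nhdsWithin x ({x}ᶜ)) (nhds 0) :=
        tendsto_iff_dist_tendsto_zero.mp (hA.mono_left nhdsWithin_le_nhds)
      simpa [Real.dist_eq] using this
  constructor
  · have hfun : (fun y => -(y * (s 1 y).toReal) - (1 - y) * (s 0 y).toReal)
        = fun y => -(ψ y) := by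
      funext y; simp only [hψdef, hf]; ring
    have hval : (s 0 x).toReal - (s 1 x).toReal = -(A x) := by
      simp only [hAdef, hf]; ring
    rw [hfun, hval]
    exact hψ.neg
  · intro i
    fin_cases i <;> simp [hf] <;> ring
end

section
/- Converse Savage representation: let φ : [0,1] → ℝ be bounded, strictly convex, and differentiable on (0,1), and let s : {0,1} × [0,1] → [0,∞] be continuous with s(i,x) = -φ(x) - φ'(x)·(i - x) for all x ∈ (0,1), i ∈ {0,1}. Then s is a proper scoring rule: for every p ∈ [0,1], the expected score p·s(1,x) + (1-p)·s(0,x) is uniquely minimized over x ∈ [0,1] at x = p. -/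
open Set

/-!
On the interior, the expected score of the report `t` under the truth `p` is
`-(φ t + φ' t * (p - t))`, minus the tangent line of `φ` at `t` evaluated at `p`.
Strict convexity (tangent lines lie strictly below `φ`, and `φ'` is strictly increasing) makes
this strictly decreasing in `t` up to `p` and strictly increasing from `p` on. Continuity of `s`
carries both strict monotonicity statements to the closed intervals `[0, p]` and `[p, 1]`.
-/

section StrictMonoExtension

variable {α β : Type*} [LinearOrder α] [TopologicalSpace α] [OrderTopology α] [DenselyOrdered α]
  [LinearOrder β] [TopologicalSpace β] [OrderClosedTopology β] {f : α → β} {a b : α}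

theorem StrictMonoOn.Icc_of_Ioo (hf : StrictMonoOn f (Ioo a b)) (hc : ContinuousOn f (Icc a b)) :
    StrictMonoOn f (Icc a b) := by
  intro x hx y hy hxy
  obtain ⟨u, hxu, huy⟩ := exists_between hxy
  obtain ⟨v, huv, hvy⟩ := exists_between huy
  have hu : u ∈ Ioo a b := ⟨hx.1.trans_lt hxu, huy.trans_le hy.2⟩
  have hv : v ∈ Ioo a b := ⟨hx.1.trans_lt (hxu.trans huv), hvy.trans_le hy.2⟩
  have hxu' : f x ≤ f u :=
    ContinuousWithinAt.closure_le (by rw [closure_Ioo hxu.ne]; exact left_mem_Icc.2 hxu.le)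
      ((hc x hx).mono fun t (ht : t ∈ Ioo x u) ↦ ⟨hx.1.trans ht.1.le, ht.2.le.trans hu.2.le⟩)
      continuousWithinAt_const
      fun t ht ↦ (hf ⟨hx.1.trans_lt ht.1, ht.2.trans hu.2⟩ hu ht.2).le
  have hvy' : f v ≤ f y :=
    ContinuousWithinAt.closure_le (by rw [closure_Ioo hvy.ne]; exact right_mem_Icc.2 hvy.le)
      continuousWithinAt_const
      ((hc y hy).mono fun t (ht : t ∈ Ioo v y) ↦ ⟨hv.1.le.trans ht.1.le, ht.2.le.trans hy.2⟩)
      fun t ht ↦ (hf hv ⟨hv.1.trans ht.1, ht.2.trans_le hy.2⟩ ht.1).le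
  exact hxu'.trans_lt ((hf hu hv huv).trans_le hvy')

theorem StrictAntiOn.Icc_of_Ioo (hf : StrictAntiOn f (Ioo a b)) (hc : ContinuousOn f (Icc a b)) :
    StrictAntiOn f (Icc a b) :=
  StrictMonoOn.Icc_of_Ioo (β := βᵒᵈ) hf hc

end StrictMonoExtension

section Tangent

variable {φ : ℝ → ℝ} {S : Set ℝ} {x y d : ℝ}

theorem StrictConvexOn.add_mul_sub_lt_of_hasDerivAt (hφ : StrictConvexOn ℝ S φ) (hx : x ∈ S)
    (hy : y ∈ S) (hxy : x ≠ y) (hd : HasDerivAt φ d x) : φ x + d * (y - x) < φ y := by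
  rcases hxy.lt_or_gt with hlt | hgt
  · have h := hφ.lt_slope_of_hasDerivAt hx hy hlt hd
    rw [slope_def_field, lt_div_iff₀ (sub_pos.2 hlt)] at h
    linarith
  · have h := hφ.slope_lt_of_hasDerivAt hy hx hgt hd
    rw [slope_def_field, div_lt_iff₀ (sub_pos.2 hgt)] at h
    linarith

end Tangent

def savageExpectedScore (φ φ' : ℝ → ℝ) (p t : ℝ) : ℝ := -φ t - φ' t * (p - t)

section SavageExpectedScore

variable {φ φ' : ℝ → ℝ} {S : Set ℝ} {p a b : ℝ}

theorem savageExpectedScore_lt_of_lt_of_le (hφ : StrictConvexOn ℝ S φ) (ha : a ∈ S) (hb : b ∈ S)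
    (hda : HasDerivAt φ (φ' a) a) (hdb : HasDerivAt φ (φ' b) b) (hab : a < b) (hbp : b ≤ p) :
    savageExpectedScore φ φ' p b < savageExpectedScore φ φ' p a := by
  have htangent := hφ.add_mul_sub_lt_of_hasDerivAt ha hb hab.ne hda
  have hderiv : φ' a < φ' b :=
    (hφ.lt_slope_of_hasDerivAt ha hb hab hda).trans (hφ.slope_lt_of_hasDerivAt ha hb hab hdb)
  have := mul_le_mul_of_nonneg_right hderiv.le (sub_nonneg.2 hbp)
  unfold savageExpectedScore
  linarith

theorem savageExpectedScore_lt_of_le_of_lt (hφ : StrictConvexOn ℝ S φ) (ha : a ∈ S) (hb : b ∈ S)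
    (hda : HasDerivAt φ (φ' a) a) (hdb : HasDerivAt φ (φ' b) b) (hpa : p ≤ a) (hab : a < b) :
    savageExpectedScore φ φ' p a < savageExpectedScore φ φ' p b := by
  have htangent := hφ.add_mul_sub_lt_of_hasDerivAt hb ha hab.ne' hdb
  have hderiv : φ' a < φ' b :=
    (hφ.lt_slope_of_hasDerivAt ha hb hab hda).trans (hφ.slope_lt_of_hasDerivAt ha hb hab hdb)
  have := mul_le_mul_of_nonneg_right hderiv.le (sub_nonneg.2 hpa)
  unfold savageExpectedScore
  linarith

end SavageExpectedScore

noncomputable def expectedScore (s : Fin 2 → ℝ → ENNReal) (p x : ℝ) : ENNReal :=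
  ENNReal.ofReal p * s 1 x + ENNReal.ofReal (1 - p) * s 0 x

section ExpectedScore

variable {s : Fin 2 → ℝ → ENNReal} {φ φ' : ℝ → ℝ} {p t : ℝ} {S : Set ℝ}

theorem expectedScore_eq_ofReal_savageExpectedScore (hp : p ∈ Icc (0 : ℝ) 1)
    (hfin : ∀ i, s i t ≠ ⊤) (hsav : ∀ i : Fin 2, (s i t).toReal = -φ t - φ' t * ((i : ℝ) - t)) :
    expectedScore s p t = ENNReal.ofReal (savageExpectedScore φ φ' p t) ∧
      0 ≤ savageExpectedScore φ φ' p t := by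
  have h1p : 0 ≤ 1 - p := sub_nonneg.2 hp.2
  have hA := mul_nonneg hp.1 (s 1 t).toReal_nonneg
  have hB := mul_nonneg h1p (s 0 t).toReal_nonneg
  have hsum : p * (s 1 t).toReal + (1 - p) * (s 0 t).toReal = savageExpectedScore φ φ' p t := by
    rw [hsav 1, hsav 0, savageExpectedScore]
    simp only [Fin.isValue, Fin.val_one, Fin.val_zero, Nat.cast_one, Nat.cast_zero]
    ring
  refine ⟨?_, hsum ▸ add_nonneg hA hB⟩
  rw [expectedScore, ← hsum, ENNReal.ofReal_add hA hB, ENNReal.ofReal_mul hp.1,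
    ENNReal.ofReal_mul h1p, ENNReal.ofReal_toReal (hfin 1), ENNReal.ofReal_toReal (hfin 0)]

theorem continuousOn_expectedScore (hs : ∀ i, ContinuousOn (s i) S) :
    ContinuousOn (expectedScore s p) S :=
  ((ENNReal.continuous_const_mul ENNReal.ofReal_ne_top).comp_continuousOn (hs 1)).add
    ((ENNReal.continuous_const_mul ENNReal.ofReal_ne_top).comp_continuousOn (hs 0))

end ExpectedScore

theorem stmt_9_general (φ φ' : ℝ → ℝ) (s : Fin 2 → ℝ → ENNReal)
    (hconv : StrictConvexOn ℝ (Icc (0:ℝ) 1) φ)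
    (hderiv : ∀ x ∈ Ioo (0:ℝ) 1, HasDerivAt φ (φ' x) x)
    (hcont : ∀ i : Fin 2, ContinuousOn (s i) (Icc (0:ℝ) 1))
    (hfin : ∀ i : Fin 2, ∀ x ∈ Ioo (0:ℝ) 1, s i x ≠ ⊤)
    (hsav : ∀ x ∈ Ioo (0:ℝ) 1, ∀ i : Fin 2,
      (s i x).toReal = -φ x - φ' x * ((i : ℝ) - x)) :
    ∀ p ∈ Icc (0:ℝ) 1, ∀ x ∈ Icc (0:ℝ) 1, x ≠ p →
      ENNReal.ofReal p * s 1 p + ENNReal.ofReal (1 - p) * s 0 p <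
      ENNReal.ofReal p * s 1 x + ENNReal.ofReal (1 - p) * s 0 x := by
  intro p hp x hx hxp
  have hE (t) (ht : t ∈ Ioo (0 : ℝ) 1) :=
    expectedScore_eq_ofReal_savageExpectedScore hp (hfin · t ht) (hsav t ht)
  have hcontE : ContinuousOn (expectedScore s p) (Icc 0 1) := continuousOn_expectedScore hcont
  have hanti : StrictAntiOn (expectedScore s p) (Icc 0 p) := by
    refine StrictAntiOn.Icc_of_Ioo (fun a ha b hb hab ↦ ?_) (hcontE.mono (Icc_subset_Icc_right hp.2))
    have ha' : a ∈ Ioo (0 : ℝ) 1 := ⟨ha.1, ha.2.trans_le hp.2⟩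
    have hb' : b ∈ Ioo (0 : ℝ) 1 := ⟨hb.1, hb.2.trans_le hp.2⟩
    rw [(hE a ha').1, (hE b hb').1, ENNReal.ofReal_lt_ofReal_iff_of_nonneg (hE b hb').2]
    exact savageExpectedScore_lt_of_lt_of_le hconv (Ioo_subset_Icc_self ha')
      (Ioo_subset_Icc_self hb') (hderiv a ha') (hderiv b hb') hab hb.2.le
  have hmono : StrictMonoOn (expectedScore s p) (Icc p 1) := by
    refine StrictMonoOn.Icc_of_Ioo (fun a ha b hb hab ↦ ?_) (hcontE.mono (Icc_subset_Icc_left hp.1))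
    have ha' : a ∈ Ioo (0 : ℝ) 1 := ⟨hp.1.trans_lt ha.1, ha.2⟩
    have hb' : b ∈ Ioo (0 : ℝ) 1 := ⟨hp.1.trans_lt hb.1, hb.2⟩
    rw [(hE a ha').1, (hE b hb').1, ENNReal.ofReal_lt_ofReal_iff_of_nonneg (hE a ha').2]
    exact savageExpectedScore_lt_of_le_of_lt hconv (Ioo_subset_Icc_self ha')
      (Ioo_subset_Icc_self hb') (hderiv a ha') (hderiv b hb') ha.1.le hab
  rcases hxp.lt_or_gt with hlt | hgt
  · exact hanti ⟨hx.1, hlt.le⟩ ⟨hx.1.trans hlt.le, le_rfl⟩ hlt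
  · exact hmono ⟨le_rfl, hgt.le.trans hx.2⟩ ⟨hgt.le, hx.2⟩ hgt

/-- Converse Savage representation: if `φ` is bounded, strictly convex on
`[0,1]` and differentiable on `(0,1)`, and the continuous scoring rule `s`
satisfies `s(i,x) = -φ(x) - φ'(x)·(i-x)` on `(0,1)`, then `s` is proper. -/
theorem stmt_9 (φ φ' : ℝ → ℝ) (s : Fin 2 → ℝ → ENNReal)
    (hbdd : ∃ M : ℝ, ∀ x ∈ Icc (0:ℝ) 1, |φ x| ≤ M)
    (hconv : StrictConvexOn ℝ (Icc (0:ℝ) 1) φ)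
    (hderiv : ∀ x ∈ Ioo (0:ℝ) 1, HasDerivAt φ (φ' x) x)
    (hcont : ∀ i : Fin 2, ContinuousOn (s i) (Icc (0:ℝ) 1))
    (hfin : ∀ i : Fin 2, ∀ x ∈ Ioo (0:ℝ) 1, s i x ≠ ⊤)
    (hsav : ∀ x ∈ Ioo (0:ℝ) 1, ∀ i : Fin 2,
      (s i x).toReal = -φ x - φ' x * ((i : ℝ) - x)) :
    ∀ p ∈ Icc (0:ℝ) 1, ∀ x ∈ Icc (0:ℝ) 1, x ≠ p →
      ENNReal.ofReal p * s 1 p + ENNReal.ofReal (1 - p) * s 0 p <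
      ENNReal.ofReal p * s 1 x + ENNReal.ofReal (1 - p) * s 0 x :=
  stmt_9_general φ φ' s hconv hderiv hcont hfin hsav
end

section
/- Generalized Pythagorean inequality for Bregman divergences: with Φ, C, Z as above and π_x the Bregman projection of x onto Z, for all y ∈ Z one has d_Φ(y, π_x) ≤ d_Φ(y, x) - d_Φ(π_x, x). Equivalently, (∇Φ(π_x) - ∇Φ(x))·(y - π_x) ≥ 0 for all y ∈ Z. -/
/-!
The Pythagorean inequality is the three-point identity
`d(y,x) - d(π,x) - d(y,π) = ⟪∇Φ π - ∇Φ x, y - π⟫` combined with the first-order optimality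
condition `⟪∇Φ x, y - π⟫ ≤ ⟪∇Φ π, y - π⟫` for the minimiser `π` of `Φ - ⟪∇Φ x, ·⟫` on `Z`.
Since `π` may lie on the boundary of `C`, where `Φ` need not be differentiable, the optimality
condition is obtained along the segment `ζ t = π + t • (y - π)`: minimality at `ζ t` and the
gradient inequality at `ζ t` give `⟪∇Φ x, y - π⟫ ≤ ⟪∇Φ (ζ t), y - π⟫` for `t ∈ (0, 1]`, and
`t → 0` uses the continuity of `∇Φ`.
-/

open Set AffineMap
open scoped RealInnerProductSpace

section Gradient

variable {E : Type*} [NormedAddCommGroup E] [InnerProductSpace ℝ E] [CompleteSpace E]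
  {C : Set E} {Φ : E → ℝ}

theorem ConvexOn.add_inner_le_of_hasGradientAt (hΦ : ConvexOn ℝ C Φ) {z w g' : E}
    (hz : z ∈ C) (hw : w ∈ C) (hg' : HasGradientAt Φ g' z) :
    Φ z + ⟪g', w - z⟫ ≤ Φ w := by
  set γ : ℝ →ᵃ[ℝ] E := lineMap z w
  have hγ0 : γ 0 = z := lineMap_apply_zero z w
  have hγ1 : γ 1 = w := lineMap_apply_one z w
  have hconv : ConvexOn ℝ (Icc 0 1) (Φ ∘ γ) :=
    (hΦ.comp_affineMap γ).subset (fun _ ht => hΦ.1.lineMap_mem hz hw ht) (convex_Icc 0 1)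
  have hderiv : HasDerivAt (Φ ∘ γ) ⟪g', w - z⟫ 0 := by
    have := hg'.hasFDerivAt
    rw [← hγ0] at this
    simpa using this.comp_hasDerivAt 0 hasDerivAt_lineMap
  have := hconv.le_slope_of_hasDerivAt (by simp) (by simp) one_pos hderiv
  simp only [slope, Function.comp_apply, hγ0, hγ1, vsub_eq_sub, sub_zero, inv_one,
    one_smul] at this
  linarith

/-- Boundary points of `C` are limits of interior points, where the gradient inequality holds. -/
theorem ConvexOn.add_inner_le_of_continuousOn (hΦ : ConvexOn ℝ C Φ)
    (hCint : (interior C).Nonempty) (hΦc : ContinuousOn Φ C) {g : E → E}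
    (hg : ∀ x ∈ interior C, HasGradientAt Φ (g x) x) (hgc : ContinuousOn g C)
    {z w : E} (hz : z ∈ C) (hw : w ∈ C) :
    Φ z + ⟪g z, w - z⟫ ≤ Φ w := by
  have hz' : z ∈ closure (interior C) := by
    rw [hΦ.1.closure_interior_eq_closure_of_nonempty_interior hCint]
    exact subset_closure hz
  have hcont : ContinuousWithinAt (fun u => Φ u + ⟪g u, w - u⟫) (interior C) z :=
    ((hΦc z hz).add ((hgc z hz).inner (continuousWithinAt_const.sub continuousWithinAt_id))).mono
      interior_subset
  exact hcont.closure_le hz' continuousWithinAt_const fun u hu =>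
    hΦ.add_inner_le_of_hasGradientAt (interior_subset hu) hw (hg u hu)

theorem IsMinOn.inner_le_inner_gradient {Z : Set E} (hΦ : ConvexOn ℝ C Φ)
    (hCint : (interior C).Nonempty) (hΦc : ContinuousOn Φ C) {g : E → E}
    (hg : ∀ x ∈ interior C, HasGradientAt Φ (g x) x) (hgc : ContinuousOn g C)
    (hZC : Z ⊆ C) (hZ : Convex ℝ Z) {a π : E} (hmin : IsMinOn (fun y => Φ y - ⟪a, y⟫) Z π)
    (hπ : π ∈ Z) {y : E} (hy : y ∈ Z) :
    ⟪a, y - π⟫ ≤ ⟪g π, y - π⟫ := by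
  have hseg : ∀ t ∈ Ioc (0 : ℝ) 1, ⟪a, y - π⟫ ≤ ⟪g (lineMap π y t), y - π⟫ := by
    intro t ht
    set ζ := lineMap π y t
    have hζ : ζ ∈ Z := hZ.lineMap_mem hπ hy (Ioc_subset_Icc_self ht)
    have hζπ : ζ - π = t • (y - π) := by simp [ζ, lineMap_apply, vsub_eq_sub]
    have hmin_t : Φ π - ⟪a, π⟫ ≤ Φ ζ - ⟪a, ζ⟫ := hmin hζ
    have hgrad := hΦ.add_inner_le_of_continuousOn hCint hΦc hg hgc (hZC hζ) (hZC hπ)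
    rw [← neg_sub, hζπ, inner_neg_right, real_inner_smul_right] at hgrad
    have : ⟪a, ζ⟫ - ⟪a, π⟫ = t * ⟪a, y - π⟫ := by
      rw [← inner_sub_right, hζπ, real_inner_smul_right]
    nlinarith [ht.1]
  have hcont : ContinuousWithinAt (fun t : ℝ => ⟪g (lineMap π y t), y - π⟫) (Ioc 0 1) 0 :=
    ((hgc π (hZC hπ)).comp_of_eq lineMap_continuous.continuousWithinAt
      (fun t ht => hZC (hZ.lineMap_mem hπ hy (Ioc_subset_Icc_self ht)))
      (lineMap_apply_zero π y)).inner continuousWithinAt_const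
  have h0 : (0 : ℝ) ∈ closure (Ioc 0 1) := by simp
  simpa using continuousWithinAt_const.closure_le h0 hcont hseg

end Gradient

theorem stmt_13_general {n : ℕ} (C Z : Set (EuclideanSpace ℝ (Fin n)))
    (Φ : EuclideanSpace ℝ (Fin n) → ℝ) (g : EuclideanSpace ℝ (Fin n) → EuclideanSpace ℝ (Fin n))
    (hCint : (interior C).Nonempty)
    (hΦ : StrictConvexOn ℝ C Φ) (hΦc : ContinuousOn Φ C)
    (hg : ∀ x ∈ interior C, HasGradientAt Φ (g x) x)
    (hgc : ContinuousOn g C)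
    (hZC : Z ⊆ C) (hZconv : Convex ℝ Z)
    (x : EuclideanSpace ℝ (Fin n))
    (π : EuclideanSpace ℝ (Fin n)) (hπZ : π ∈ Z)
    (hπmin : ∀ y ∈ Z, Φ π - Φ x - ⟪g x, π - x⟫ ≤ Φ y - Φ x - ⟪g x, y - x⟫) :
    ∀ y ∈ Z,
      Φ y - Φ π - ⟪g π, y - π⟫ ≤
        (Φ y - Φ x - ⟪g x, y - x⟫) - (Φ π - Φ x - ⟪g x, π - x⟫) ∧
      0 ≤ ⟪g π - g x, y - π⟫ := by
  intro y hy
  have hmin : IsMinOn (fun z => Φ z - ⟪g x, z⟫) Z π := fun z hz => by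
    have := hπmin z hz
    simp only [inner_sub_right] at this
    simp only [mem_ofPred_eq]
    linarith
  have hvar := hmin.inner_le_inner_gradient hΦ.convexOn hCint hΦc hg hgc hZC hZconv hπZ hy
  simp only [inner_sub_left, inner_sub_right] at hvar ⊢
  constructor <;> linarith

/-- Generalized Pythagorean inequality for Bregman divergences: if `π` is the
Bregman projection of `x` onto the nonempty compact convex set `Z ⊆ C`, then
for all `y ∈ Z`, `d_Φ(y,π) ≤ d_Φ(y,x) - d_Φ(π,x)`; equivalently
`⟪∇Φ(π) - ∇Φ(x), y - π⟫ ≥ 0`. -/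
theorem stmt_13 {n : ℕ} (C Z : Set (EuclideanSpace ℝ (Fin n)))
    (Φ : EuclideanSpace ℝ (Fin n) → ℝ) (g : EuclideanSpace ℝ (Fin n) → EuclideanSpace ℝ (Fin n))
    (hC : Convex ℝ C) (hCint : (interior C).Nonempty)
    (hΦ : StrictConvexOn ℝ C Φ) (hΦc : ContinuousOn Φ C)
    (hg : ∀ x ∈ interior C, HasGradientAt Φ (g x) x)
    (hgc : ContinuousOn g C)
    (hZC : Z ⊆ C) (hZne : Z.Nonempty) (hZconv : Convex ℝ Z) (hZcpt : IsCompact Z)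
    (x : EuclideanSpace ℝ (Fin n)) (hx : x ∈ C)
    (π : EuclideanSpace ℝ (Fin n)) (hπZ : π ∈ Z)
    (hπmin : ∀ y ∈ Z, Φ π - Φ x - ⟪g x, π - x⟫ ≤ Φ y - Φ x - ⟪g x, y - x⟫) :
    ∀ y ∈ Z,
      Φ y - Φ π - ⟪g π, y - π⟫ ≤
        (Φ y - Φ x - ⟪g x, y - x⟫) - (Φ π - Φ x - ⟪g x, π - x⟫) ∧
      0 ≤ ⟪g π - g x, y - π⟫ :=
  stmt_13_general C Z Φ g hCint hΦ hΦc hg hgc hZC hZconv x π hπZ hπmin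
end

section
/- No coherent forecast is weakly dominated (bounded case): let s be a bounded proper scoring rule and f a coherent forecast for events E_1,...,E_n (i.e., f ∈ conv(V) where V is the set of truth-value vectors). If g is a forecast with P_s(ω,g) ≤ P_s(ω,f) for all ω ∈ Ω, then g = f. -/
open Set

/-- No coherent forecast is weakly dominated (bounded case): if `s` is a
bounded proper scoring rule, `f` lies in the convex hull of the set of
truth-value vectors, and the forecast `g` has penalty `≤` that of `f` in
every state `ω`, then `g = f`. -/
theorem stmt_17 {Ω : Type*} [Nonempty Ω] {n : ℕ} (E : Fin n → Set Ω)
    (s : ℝ → ℝ → ℝ)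
    (hproper : ∀ p ∈ Icc (0:ℝ) 1, ∀ x ∈ Icc (0:ℝ) 1, x ≠ p →
      p * s 1 p + (1 - p) * s 0 p < p * s 1 x + (1 - p) * s 0 x)
    (hcont : ∀ i ∈ ({0, 1} : Set ℝ), ContinuousOn (s i) (Icc (0:ℝ) 1))
    (hbdd : ∃ M : ℝ, ∀ i ∈ ({0, 1} : Set ℝ), ∀ x ∈ Icc (0:ℝ) 1, |s i x| ≤ M)
    (hnonneg : ∀ i ∈ ({0, 1} : Set ℝ), ∀ x ∈ Icc (0:ℝ) 1, 0 ≤ s i x)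
    (f g : Fin n → ℝ)
    (hf : f ∈ convexHull ℝ
      {v : Fin n → ℝ | ∃ ω : Ω, v = fun i => (E i).indicator (fun _ => (1:ℝ)) ω})
    (hg : ∀ i, g i ∈ Icc (0:ℝ) 1)
    (hdom : ∀ ω : Ω,
      (∑ i, s ((E i).indicator (fun _ => (1:ℝ)) ω) (g i)) ≤
      (∑ i, s ((E i).indicator (fun _ => (1:ℝ)) ω) (f i))) :
    g = f := by
  rw [convexHull_eq] at hf
  obtain ⟨ι, t, w, z, hw0, hw1, hz, hfz⟩ := hf
  have hf_eq : ∀ i, f i = ∑ k ∈ t, w k * z k i := by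
    intro i
    rw [← hfz, Finset.centerMass_eq_of_sum_1 _ _ hw1]
    simp [Finset.sum_apply]
  have hz01 : ∀ k ∈ t, ∀ i, z k i = 0 ∨ z k i = 1 := by
    intro k hk i
    obtain ⟨ω, hω⟩ := hz k hk
    rw [hω]
    by_cases h : ω ∈ E i <;> simp [Set.indicator_apply, h]
  have hfmem : ∀ i, f i ∈ Icc (0:ℝ) 1 := by
    intro i
    rw [hf_eq]
    constructor
    · apply Finset.sum_nonneg
      intro k hk
      rcases hz01 k hk i with h | h <;> simp [h, hw0 k hk]
    · calc ∑ k ∈ t, w k * z k i ≤ ∑ k ∈ t, w k := by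
            apply Finset.sum_le_sum
            intro k hk
            rcases hz01 k hk i with h | h <;> simp [h, hw0 k hk]
         _ = 1 := hw1
  have key : ∀ i x, ∑ k ∈ t, w k * s (z k i) x = f i * s 1 x + (1 - f i) * s 0 x := by
    intro i x
    have h1 : ∀ k ∈ t, w k * s (z k i) x
        = (w k * z k i) * s 1 x + (w k - w k * z k i) * s 0 x := by
      intro k hk
      rcases hz01 k hk i with h | h <;> rw [h] <;> ring
    rw [Finset.sum_congr rfl h1]
    simp_rw [sub_mul]
    rw [Finset.sum_add_distrib, Finset.sum_sub_distrib, ← Finset.sum_mul,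
      ← Finset.sum_mul, ← Finset.sum_mul, ← hf_eq, hw1]
  have main : ∑ i, (f i * s 1 (g i) + (1 - f i) * s 0 (g i))
      ≤ ∑ i, (f i * s 1 (f i) + (1 - f i) * s 0 (f i)) := by
    have h1 : ∀ x : Fin n → ℝ,
        ∑ i, (f i * s 1 (x i) + (1 - f i) * s 0 (x i))
        = ∑ k ∈ t, w k * ∑ i, s (z k i) (x i) := by
      intro x
      have hc : ∑ k ∈ t, w k * ∑ i, s (z k i) (x i)
          = ∑ i, (f i * s 1 (x i) + (1 - f i) * s 0 (x i)) := by
        calc ∑ k ∈ t, w k * ∑ i, s (z k i) (x i)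
            = ∑ k ∈ t, ∑ i, w k * s (z k i) (x i) := by simp_rw [Finset.mul_sum]
          _ = ∑ i, ∑ k ∈ t, w k * s (z k i) (x i) := Finset.sum_comm
          _ = ∑ i, (f i * s 1 (x i) + (1 - f i) * s 0 (x i)) :=
              Finset.sum_congr rfl fun i _ => key i (x i)
      exact hc.symm
    rw [h1 g, h1 f]
    apply Finset.sum_le_sum
    intro k hk
    obtain ⟨ω, hω⟩ := hz k hk
    have := hdom ω
    apply mul_le_mul_of_nonneg_left _ (hw0 k hk)
    simpa [hω] using this
  funext i
  by_contra hne
  have hstrict : ∑ i, (f i * s 1 (f i) + (1 - f i) * s 0 (f i))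
      < ∑ i, (f i * s 1 (g i) + (1 - f i) * s 0 (g i)) := by
    refine Finset.sum_lt_sum (fun j _ => ?_)
      ⟨i, Finset.mem_univ i, hproper (f i) (hfmem i) (g i) (hg i) hne⟩
    by_cases h : g j = f j
    · rw [h]
    · exact (hproper (f j) (hfmem j) (g j) (hg j) h).le
  exact absurd main (not_le.mpr hstrict)
end

section
/- Every incoherent forecast is strongly dominated by a coherent one (bounded case): let s be a bounded proper scoring rule and f ∈ [0,1]^n a forecast that is not coherent (f ∉ conv(V)). Then there exists a coherent forecast g ∈ conv(V) such that P_s(ω,g) < P_s(ω,f) for every ω ∈ Ω. Moreover g can be taken to be the Bregman projection of f onto conv(V) with respect to Φ(x) = Σ_i φ(x_i). -/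
/-!
With the Savage form `s(v, x) = -φ x - φ' x (v - x)`, for a truth vector `v` and forecasts
`f`, `g` one has
`∑ᵢ s(vᵢ, fᵢ) - ∑ᵢ s(vᵢ, gᵢ) = d_Φ(g, f) + ⟪∇Φ(g) - ∇Φ(f), v - g⟫`.
Take `g` to be a Bregman projection of `f` onto the compact convex set `conv V`. Since `f ∉ conv V`
and `φ` is strictly convex, `d_Φ(g, f) > 0`; since `v ∈ conv V`, the first-order optimality
condition of the projection makes the inner product nonnegative.
-/

open Set Filter Topology

theorem hasDerivWithinAt_Icc_of_hasDerivAt_Ioo {φ φ' : ℝ → ℝ} {a b : ℝ} (hab : a < b)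
    (hφ : ContinuousOn φ (Icc a b)) (hφ' : ContinuousOn φ' (Icc a b))
    (hd : ∀ x ∈ Ioo a b, HasDerivAt φ (φ' x) x) :
    ∀ x ∈ Icc a b, HasDerivWithinAt φ (φ' x) (Icc a b) x := by
  have hdiff : DifferentiableOn ℝ φ (Ioo a b) := fun x hx =>
    (hd x hx).differentiableAt.differentiableWithinAt
  have hderiv : EqOn (deriv φ) φ' (Ioo a b) := fun x hx => (hd x hx).deriv
  intro x hx
  rcases hx.1.eq_or_lt with rfl | hax
  · refine (hasDerivWithinAt_Ici_of_tendsto_deriv hdiff ((hφ a hx).mono Ioo_subset_Icc_self)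
      (Ioo_mem_nhdsGT hab) ?_).mono Icc_subset_Ici_self
    exact ((hφ' a hx).tendsto.mono_left (nhdsWithin_le_of_mem (Icc_mem_nhdsGT hab))).congr'
      (eventually_of_mem (Ioo_mem_nhdsGT hab) fun y hy => (hderiv hy).symm)
  rcases hx.2.eq_or_lt with rfl | hxb
  · refine (hasDerivWithinAt_Iic_of_tendsto_deriv hdiff ((hφ x hx).mono Ioo_subset_Icc_self)
      (Ioo_mem_nhdsLT hab) ?_).mono Icc_subset_Iic_self
    exact ((hφ' x hx).tendsto.mono_left (nhdsWithin_le_of_mem (Icc_mem_nhdsLT hab))).congr'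
      (eventually_of_mem (Ioo_mem_nhdsLT hab) fun y hy => (hderiv hy).symm)
  exact (hd x ⟨hax, hxb⟩).hasDerivWithinAt

def bregmanDiv (φ φ' : ℝ → ℝ) (x y : ℝ) : ℝ := φ x - φ y - φ' y * (x - y)

def savageScore (φ φ' : ℝ → ℝ) (v x : ℝ) : ℝ := -φ x - φ' x * (v - x)

section Bregman

variable {φ φ' : ℝ → ℝ} {S : Set ℝ} {x y : ℝ}

theorem savageScore_sub_savageScore (v : ℝ) :
    savageScore φ φ' v y - savageScore φ φ' v x =
      bregmanDiv φ φ' x y + (φ' x - φ' y) * (v - x) := by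
  unfold savageScore bregmanDiv; ring

theorem StrictConvexOn.bregmanDiv_pos (hφ : StrictConvexOn ℝ S φ)
    (hd : HasDerivWithinAt φ (φ' y) S y) (hx : x ∈ S) (hy : y ∈ S) (hxy : x ≠ y) :
    0 < bregmanDiv φ φ' x y := by
  unfold bregmanDiv
  rcases hxy.lt_or_gt with h | h
  · have := hφ.slope_lt_of_hasDerivWithinAt hx hy h hd
    rw [slope_def_field, div_lt_iff₀ (sub_pos.2 h)] at this
    linarith
  · have := hφ.lt_slope_of_hasDerivWithinAt hy hx h hd
    rw [slope_def_field, lt_div_iff₀ (sub_pos.2 h)] at this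
    linarith

theorem StrictConvexOn.bregmanDiv_nonneg (hφ : StrictConvexOn ℝ S φ)
    (hd : HasDerivWithinAt φ (φ' y) S y) (hx : x ∈ S) (hy : y ∈ S) :
    0 ≤ bregmanDiv φ φ' x y := by
  rcases eq_or_ne x y with rfl | hxy
  · simp [bregmanDiv]
  · exact (hφ.bregmanDiv_pos hd hx hy hxy).le

theorem HasDerivWithinAt.bregmanDiv_left (hd : HasDerivWithinAt φ (φ' x) S x) :
    HasDerivWithinAt (fun z => bregmanDiv φ φ' z y) (φ' x - φ' y) S x := by
  have := (hd.sub_const (φ y)).fun_sub (((hasDerivWithinAt_id x S).sub_const y).const_mul (φ' y))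
  rwa [mul_one] at this

end Bregman

def bregmanDivSum {ι : Type*} [Fintype ι] (φ φ' : ℝ → ℝ) (y f : ι → ℝ) : ℝ :=
  ∑ i, bregmanDiv φ φ' (y i) (f i)

section BregmanProjection

variable {ι : Type*} [Fintype ι] {φ φ' : ℝ → ℝ} {S : Set ℝ} {K : Set (ι → ℝ)} {f g : ι → ℝ}

theorem hasFDerivWithinAt_bregmanDivSum (hd : ∀ x ∈ S, HasDerivWithinAt φ (φ' x) S x)
    (hKS : K ⊆ univ.pi fun _ => S) (hg : g ∈ K) :
    HasFDerivWithinAt (bregmanDivSum φ φ' · f)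
      (∑ i, (φ' (g i) - φ' (f i)) • ContinuousLinearMap.proj (R := ℝ) (φ := fun _ : ι => ℝ) i)
      K g := by
  unfold bregmanDivSum
  refine HasFDerivWithinAt.fun_sum fun i _ => ?_
  have hgi : g i ∈ S := hKS hg i (mem_univ i)
  exact ((hd _ hgi).bregmanDiv_left (y := f i)).comp_hasFDerivWithinAt g
    (hasFDerivWithinAt_apply (𝕜 := ℝ) (F' := fun _ => ℝ) i g K) fun y hy => hKS hy i (mem_univ i)

theorem IsMinOn.bregmanDivSum_inner_nonneg (hK : Convex ℝ K)
    (hKS : K ⊆ univ.pi fun _ => S) (hd : ∀ x ∈ S, HasDerivWithinAt φ (φ' x) S x)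
    (hmin : IsMinOn (bregmanDivSum φ φ' · f) K g) (hg : g ∈ K) {v : ι → ℝ} (hv : v ∈ K) :
    0 ≤ ∑ i, (φ' (g i) - φ' (f i)) * (v i - g i) := by
  simpa using hmin.localize.hasFDerivWithinAt_nonneg (hasFDerivWithinAt_bregmanDivSum hd hKS hg)
    (sub_mem_posTangentConeAt_of_segment_subset (hK.segment_subset hg hv))

theorem IsCompact.exists_isMinOn_bregmanDivSum (hK : IsCompact K) (hne : K.Nonempty)
    (hKS : K ⊆ univ.pi fun _ => S) (hφ : ContinuousOn φ S) :
    ∃ g ∈ K, IsMinOn (bregmanDivSum φ φ' · f) K g := by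
  refine hK.exists_isMinOn hne (continuousOn_finsetSum _ fun i _ => ?_)
  have hφi : ContinuousOn (fun y : ι → ℝ => φ (y i)) K :=
    hφ.comp (continuous_apply i).continuousOn fun y hy => hKS hy i (mem_univ i)
  exact (hφi.sub continuousOn_const).sub
    (continuousOn_const.mul ((continuous_apply i).continuousOn.sub continuousOn_const))

theorem StrictConvexOn.bregmanDivSum_pos (hφ : StrictConvexOn ℝ S φ)
    (hd : ∀ x ∈ S, HasDerivWithinAt φ (φ' x) S x) (hg : ∀ i, g i ∈ S) (hf : ∀ i, f i ∈ S)
    (hgf : g ≠ f) : 0 < bregmanDivSum φ φ' g f := by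
  obtain ⟨i, hi⟩ := Function.ne_iff.1 hgf
  exact Finset.sum_pos' (fun j _ => hφ.bregmanDiv_nonneg (hd _ (hf j)) (hg j) (hf j))
    ⟨i, Finset.mem_univ i, hφ.bregmanDiv_pos (hd _ (hf i)) (hg i) (hf i) hi⟩

theorem sum_savageScore_lt_of_isMinOn_bregmanDivSum (hK : Convex ℝ K)
    (hKS : K ⊆ univ.pi fun _ => S) (hφ : StrictConvexOn ℝ S φ)
    (hd : ∀ x ∈ S, HasDerivWithinAt φ (φ' x) S x) (hf : ∀ i, f i ∈ S) (hfK : f ∉ K)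
    (hmin : IsMinOn (bregmanDivSum φ φ' · f) K g) (hg : g ∈ K) {v : ι → ℝ} (hv : v ∈ K) :
    ∑ i, savageScore φ φ' (v i) (g i) < ∑ i, savageScore φ φ' (v i) (f i) := by
  have hpos : 0 < bregmanDivSum φ φ' g f :=
    hφ.bregmanDivSum_pos hd (fun i => hKS hg i (mem_univ i)) hf (ne_of_mem_of_not_mem hg hfK)
  have hineq := hmin.bregmanDivSum_inner_nonneg hK hKS hd hg hv
  rw [← sub_pos, ← Finset.sum_sub_distrib]
  simp only [savageScore_sub_savageScore, Finset.sum_add_distrib]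
  exact add_pos_of_pos_of_nonneg hpos hineq

end BregmanProjection

theorem indicator_vectors_subset_pi_zero_one {Ω ι : Type*} (E : ι → Set Ω) :
    {v : ι → ℝ | ∃ ω : Ω, v = fun i => (E i).indicator (fun _ => (1:ℝ)) ω} ⊆
      univ.pi fun _ => ({0, 1} : Set ℝ) := by
  rintro _ ⟨ω, rfl⟩ i -
  by_cases h : ω ∈ E i <;> simp [h]

theorem stmt_18_general {Ω : Type*} [Nonempty Ω] {n : ℕ} (E : Fin n → Set Ω)
    (s : ℝ → ℝ → ℝ) (φ φ' : ℝ → ℝ)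
    (hcont : ∀ i ∈ ({0, 1} : Set ℝ), ContinuousOn (s i) (Icc (0:ℝ) 1))
    (hφ : ∀ x ∈ Icc (0:ℝ) 1, φ x = -(x * s 1 x) - (1 - x) * s 0 x)
    (hφconv : StrictConvexOn ℝ (Icc (0:ℝ) 1) φ)
    (hφderiv : ∀ x ∈ Ioo (0:ℝ) 1, HasDerivAt φ (φ' x) x)
    (hφ'cont : ContinuousOn φ' (Icc (0:ℝ) 1))
    (hsav : ∀ x ∈ Ioo (0:ℝ) 1, ∀ i ∈ ({0, 1} : Set ℝ),
      s i x = -φ x - φ' x * (i - x))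
    (f : Fin n → ℝ) (hfc : ∀ i, f i ∈ Icc (0:ℝ) 1)
    (hfinc : f ∉ convexHull ℝ
      {v : Fin n → ℝ | ∃ ω : Ω, v = fun i => (E i).indicator (fun _ => (1:ℝ)) ω}) :
    ∃ g ∈ convexHull ℝ
      {v : Fin n → ℝ | ∃ ω : Ω, v = fun i => (E i).indicator (fun _ => (1:ℝ)) ω},
      (∀ y ∈ convexHull ℝ
        {v : Fin n → ℝ | ∃ ω : Ω, v = fun i => (E i).indicator (fun _ => (1:ℝ)) ω},
        (∑ i, (φ (g i) - φ (f i) - φ' (f i) * (g i - f i))) ≤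
        (∑ i, (φ (y i) - φ (f i) - φ' (f i) * (y i - f i)))) ∧
      ∀ ω : Ω,
        (∑ i, s ((E i).indicator (fun _ => (1:ℝ)) ω) (g i)) <
        (∑ i, s ((E i).indicator (fun _ => (1:ℝ)) ω) (f i)) := by
  set V : Set (Fin n → ℝ) := {v | ∃ ω : Ω, v = fun i => (E i).indicator (fun _ => (1:ℝ)) ω}
  have hφc : ContinuousOn φ (Icc 0 1) := by
    refine ContinuousOn.congr ?_ hφ
    have := hcont 1 (by simp); have := hcont 0 (by simp)
    fun_prop
  have hd := hasDerivWithinAt_Icc_of_hasDerivAt_Ioo zero_lt_one hφc hφ'cont hφderiv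
  have hscore : ∀ i ∈ ({0, 1} : Set ℝ), EqOn (s i) (savageScore φ φ' i) (Icc 0 1) := by
    intro i hi
    refine EqOn.of_subset_closure (fun x hx => hsav x hx i hi) (hcont i hi) ?_
      Ioo_subset_Icc_self (closure_Ioo zero_ne_one).ge
    unfold savageScore
    fun_prop
  have hV01 : V ⊆ univ.pi fun _ => ({0, 1} : Set ℝ) := indicator_vectors_subset_pi_zero_one E
  have hKS : convexHull ℝ V ⊆ univ.pi fun _ => Icc (0:ℝ) 1 :=
    convexHull_min (hV01.trans (pi_mono fun _ _ => by simp [insert_subset_iff]))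
      (convex_pi fun _ _ => convex_Icc 0 1)
  have hVfin : V.Finite :=
    (Finite.pi fun _ => (finite_singleton (1:ℝ)).insert 0).subset hV01
  have hKne : (convexHull ℝ V).Nonempty :=
    let ⟨ω⟩ := ‹Nonempty Ω›; ⟨_, subset_convexHull ℝ V ⟨ω, rfl⟩⟩
  obtain ⟨g, hgK, hmin⟩ := (hVfin.isCompact_convexHull (𝕜 := ℝ)).exists_isMinOn_bregmanDivSum
    hKne hKS hφc (φ' := φ') (f := f)
  refine ⟨g, hgK, fun y hy => hmin hy, fun ω => ?_⟩
  set v : Fin n → ℝ := fun i => (E i).indicator (fun _ => (1:ℝ)) ω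
  have hvV : v ∈ V := ⟨ω, rfl⟩
  have hs : ∀ x : Fin n → ℝ, (∀ i, x i ∈ Icc (0:ℝ) 1) →
      ∑ i, s (v i) (x i) = ∑ i, savageScore φ φ' (v i) (x i) := fun x hx =>
    Finset.sum_congr rfl fun i _ => hscore _ (hV01 hvV i (mem_univ i)) (hx i)
  rw [hs g fun i => hKS hgK i (mem_univ i), hs f hfc]
  exact sum_savageScore_lt_of_isMinOn_bregmanDivSum (convex_convexHull ℝ V) hKS hφconv hd
    hfc hfinc hmin hgK (subset_convexHull ℝ V hvV)

/-- Every incoherent forecast is strongly dominated by a coherent one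
(bounded case): if `s` is a bounded proper scoring rule with Savage
representation via `φ`, and the forecast `f ∈ [0,1]^n` is not in the convex
hull of the truth-value vectors, then the Bregman projection `g` of `f` onto
that hull is coherent and strictly beats `f` in every state. -/
theorem stmt_18 {Ω : Type*} [Nonempty Ω] {n : ℕ} (E : Fin n → Set Ω)
    (s : ℝ → ℝ → ℝ) (φ φ' : ℝ → ℝ)
    (hproper : ∀ p ∈ Icc (0:ℝ) 1, ∀ x ∈ Icc (0:ℝ) 1, x ≠ p →
      p * s 1 p + (1 - p) * s 0 p < p * s 1 x + (1 - p) * s 0 x)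
    (hcont : ∀ i ∈ ({0, 1} : Set ℝ), ContinuousOn (s i) (Icc (0:ℝ) 1))
    (hnonneg : ∀ i ∈ ({0, 1} : Set ℝ), ∀ x ∈ Icc (0:ℝ) 1, 0 ≤ s i x)
    (hbdd : ∃ M : ℝ, ∀ i ∈ ({0, 1} : Set ℝ), ∀ x ∈ Icc (0:ℝ) 1, |s i x| ≤ M)
    (hφ : ∀ x ∈ Icc (0:ℝ) 1, φ x = -(x * s 1 x) - (1 - x) * s 0 x)
    (hφconv : StrictConvexOn ℝ (Icc (0:ℝ) 1) φ)
    (hφderiv : ∀ x ∈ Ioo (0:ℝ) 1, HasDerivAt φ (φ' x) x)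
    (hφ'cont : ContinuousOn φ' (Icc (0:ℝ) 1))
    (hsav : ∀ x ∈ Ioo (0:ℝ) 1, ∀ i ∈ ({0, 1} : Set ℝ),
      s i x = -φ x - φ' x * (i - x))
    (f : Fin n → ℝ) (hfc : ∀ i, f i ∈ Icc (0:ℝ) 1)
    (hfinc : f ∉ convexHull ℝ
      {v : Fin n → ℝ | ∃ ω : Ω, v = fun i => (E i).indicator (fun _ => (1:ℝ)) ω}) :
    ∃ g ∈ convexHull ℝ
      {v : Fin n → ℝ | ∃ ω : Ω, v = fun i => (E i).indicator (fun _ => (1:ℝ)) ω},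
      (∀ y ∈ convexHull ℝ
        {v : Fin n → ℝ | ∃ ω : Ω, v = fun i => (E i).indicator (fun _ => (1:ℝ)) ω},
        (∑ i, (φ (g i) - φ (f i) - φ' (f i) * (g i - f i))) ≤
        (∑ i, (φ (y i) - φ (f i) - φ' (f i) * (y i - f i)))) ∧
      ∀ ω : Ω,
        (∑ i, s ((E i).indicator (fun _ => (1:ℝ)) ω) (g i)) <
        (∑ i, s ((E i).indicator (fun _ => (1:ℝ)) ω) (f i)) :=
  stmt_18_general E s φ φ' hcont hφ hφconv hφderiv hφ'cont hsav f hfc hfinc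
end

section
/- Corollary: for any proper scoring rule, a forecast f is weakly dominated by some forecast g ≠ f if and only if f is strongly dominated by some coherent forecast. -/
/-!
A coherent forecast `f = (μ (E i))ᵢ` is the unique minimiser of its own `μ`-expected penalty, by
strict propriety, so no `g ≠ f` weakly dominates it. Conversely, the coherent forecasts form the
convex hull `C` of the truth vectors of the events. For `f ∉ C`, a minimiser `π` over `C` of the
Bregman divergence `∑ᵢ (E_{πᵢ}[s(·, fᵢ)] - G(πᵢ))`, with `G` the entropy of `s`, satisfies the
Pythagorean inequality: the divergence bounds `P(f, v) - P(π, v)` from below at every vertex `v`,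
so `π` strictly dominates `f`. Since scores may be infinite at `0` and `1`, the minimisation is
carried out over a slightly shrunken copy of the hull, and the minimiser is finally pushed towards a
relative-interior point of `C`, which keeps its penalties finite at the vertices where those of `f`
are infinite.
-/

open Set Filter Topology MeasureTheory
open scoped ENNReal

namespace ScoringRule

noncomputable def expectedScore (s : Fin 2 → ℝ → ℝ≥0∞) (x q : ℝ) : ℝ≥0∞ :=
  ENNReal.ofReal q * s 1 x + ENNReal.ofReal (1 - q) * s 0 x

def IsStrictlyProper (s : Fin 2 → ℝ → ℝ≥0∞) : Prop :=
  ∀ p ∈ Icc (0:ℝ) 1, ∀ x ∈ Icc (0:ℝ) 1, x ≠ p → expectedScore s p p < expectedScore s x p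

noncomputable def score (s : Fin 2 → ℝ → ℝ≥0∞) (k : Fin 2) (x : ℝ) : ℝ := (s k x).toReal

/-- The real counterpart of `expectedScore`, affine in `q`; since `ENNReal.toReal ⊤ = 0`, the two
agree only where `expectedScore s x q` is finite. -/
noncomputable def realExpectedScore (s : Fin 2 → ℝ → ℝ≥0∞) (x q : ℝ) : ℝ :=
  q * score s 1 x + (1 - q) * score s 0 x

noncomputable def entropy (s : Fin 2 → ℝ → ℝ≥0∞) (q : ℝ) : ℝ := realExpectedScore s q q

noncomputable def scoreSlope (s : Fin 2 → ℝ → ℝ≥0∞) (x : ℝ) : ℝ := score s 1 x - score s 0 x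

variable {s : Fin 2 → ℝ → ℝ≥0∞}

section RealLine

variable {x p q : ℝ}

lemma expectedScore_zero (x : ℝ) : expectedScore s x 0 = s 0 x := by simp [expectedScore]

lemma expectedScore_one (x : ℝ) : expectedScore s x 1 = s 1 x := by simp [expectedScore]

lemma realExpectedScore_eq (x q : ℝ) :
    realExpectedScore s x q = score s 0 x + q * scoreSlope s x := by
  unfold realExpectedScore scoreSlope; ring

lemma expectedScore_self_ne_top (hs : IsStrictlyProper s) (hq : q ∈ Icc (0:ℝ) 1) :
    expectedScore s q q ≠ ⊤ := by
  obtain ⟨x, hx, hxq⟩ : ∃ x ∈ Icc (0:ℝ) 1, x ≠ q := by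
    rcases eq_or_ne q 0 with rfl | h
    · exact ⟨1, right_mem_Icc.2 zero_le_one, one_ne_zero⟩
    · exact ⟨0, left_mem_Icc.2 zero_le_one, h.symm⟩
  exact (hs q hq x hx hxq).ne_top

lemma ne_top_of_mem_Ioo (hs : IsStrictlyProper s) (hx : x ∈ Ioo (0:ℝ) 1) (k : Fin 2) :
    s k x ≠ ⊤ := by
  have h := ENNReal.add_ne_top.1 (expectedScore_self_ne_top hs (Ioo_subset_Icc_self hx))
  have coeff_ne_zero : ∀ {a : ℝ}, 0 < a → ENNReal.ofReal a ≠ 0 := fun ha => by simpa using ha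
  match k with
  | 0 => exact fun h0 => h.2 (by rw [h0, ENNReal.mul_top (coeff_ne_zero (sub_pos.2 hx.2))])
  | 1 => exact fun h1 => h.1 (by rw [h1, ENNReal.mul_top (coeff_ne_zero hx.1)])

lemma expectedScore_ne_top (hs : IsStrictlyProper s) (hq : q ∈ Icc (0:ℝ) 1)
    (hx : x ∈ Ioo (0:ℝ) 1 ∨ x = q) : expectedScore s x q ≠ ⊤ := by
  rcases hx with hx | rfl
  · exact ENNReal.add_ne_top.2
      ⟨ENNReal.mul_ne_top ENNReal.ofReal_ne_top (ne_top_of_mem_Ioo hs hx 1),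
        ENNReal.mul_ne_top ENNReal.ofReal_ne_top (ne_top_of_mem_Ioo hs hx 0)⟩
  · exact expectedScore_self_ne_top hs hq

lemma toReal_expectedScore (hq : q ∈ Icc (0:ℝ) 1) (h : expectedScore s x q ≠ ⊤) :
    (expectedScore s x q).toReal = realExpectedScore s x q := by
  rw [expectedScore, ENNReal.add_ne_top] at h
  rw [expectedScore, ENNReal.toReal_add h.1 h.2, ENNReal.toReal_mul, ENNReal.toReal_mul,
    ENNReal.toReal_ofReal hq.1, ENNReal.toReal_ofReal (sub_nonneg.2 hq.2)]
  rfl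

lemma entropy_lt_realExpectedScore (hs : IsStrictlyProper s) (hq : q ∈ Icc (0:ℝ) 1)
    (hx : x ∈ Icc (0:ℝ) 1) (hxq : x ≠ q) (h : expectedScore s x q ≠ ⊤) :
    entropy s q < realExpectedScore s x q := by
  rw [← toReal_expectedScore hq h, entropy,
    ← toReal_expectedScore hq (expectedScore_self_ne_top hs hq)]
  exact (ENNReal.toReal_lt_toReal (expectedScore_self_ne_top hs hq) h).2 (hs q hq x hx hxq)

lemma entropy_le_realExpectedScore (hs : IsStrictlyProper s) (hq : q ∈ Icc (0:ℝ) 1)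
    (hx : x ∈ Icc (0:ℝ) 1) (h : expectedScore s x q ≠ ⊤) :
    entropy s q ≤ realExpectedScore s x q := by
  rcases eq_or_ne x q with rfl | hxq
  · exact le_rfl
  · exact (entropy_lt_realExpectedScore hs hq hx hxq h).le

lemma entropy_le_entropy_add (hs : IsStrictlyProper s) (hp : p ∈ Icc (0:ℝ) 1)
    (hq : q ∈ Icc (0:ℝ) 1) (h : expectedScore s q p ≠ ⊤) :
    entropy s p ≤ entropy s q + (p - q) * scoreSlope s q :=
  calc entropy s p ≤ realExpectedScore s q p := entropy_le_realExpectedScore hs hp hq h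
    _ = entropy s q + (p - q) * scoreSlope s q := by
      simp only [entropy, realExpectedScore_eq]; ring

lemma continuousAt_score (hs : IsStrictlyProper s) (hcont : ∀ k, ContinuousOn (s k) (Icc 0 1))
    (hx : x ∈ Ioo (0:ℝ) 1) (k : Fin 2) : ContinuousAt (score s k) x :=
  (ENNReal.continuousAt_toReal (ne_top_of_mem_Ioo hs hx k)).comp
    ((hcont k).continuousAt (Icc_mem_nhds hx.1 hx.2))

lemma continuousOn_expectedScore (hcont : ∀ k, ContinuousOn (s k) (Icc 0 1)) (q : ℝ) :
    ContinuousOn (fun x => expectedScore s x q) (Icc 0 1) := fun x hx =>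
  (ENNReal.Tendsto.const_mul (hcont 1 x hx) (Or.inr ENNReal.ofReal_ne_top)).add
    (ENNReal.Tendsto.const_mul (hcont 0 x hx) (Or.inr ENNReal.ofReal_ne_top))

/-- `entropy s` is the infimum of the affine maps `realExpectedScore s x` over `x ∈ (0, 1)`. -/
lemma upperSemicontinuousOn_entropy (hs : IsStrictlyProper s)
    (hcont : ∀ k, ContinuousOn (s k) (Icc 0 1)) : UpperSemicontinuousOn (entropy s) (Icc 0 1) := by
  intro p hp a ha
  have hlim : Tendsto (fun x => realExpectedScore s x p) (𝓝[Ioo 0 1] p) (𝓝 (entropy s p)) := by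
    have h := ((ENNReal.continuousAt_toReal (expectedScore_self_ne_top hs hp)).tendsto.comp
      (continuousOn_expectedScore hcont p p hp)).mono_left (nhdsWithin_mono _ Ioo_subset_Icc_self)
    rw [toReal_expectedScore hp (expectedScore_self_ne_top hs hp)] at h
    refine h.congr' (eventually_nhdsWithin_of_forall fun x hx => ?_)
    exact toReal_expectedScore hp (expectedScore_ne_top hs hp (Or.inl hx))
  have : (𝓝[Ioo (0:ℝ) 1] p).NeBot :=
    mem_closure_iff_nhdsWithin_neBot.1 (by rwa [closure_Ioo zero_ne_one])
  obtain ⟨x, hxa, hx⟩ := ((hlim.eventually (gt_mem_nhds ha)).and self_mem_nhdsWithin).exists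
  have hcx : Continuous (realExpectedScore s x) := by unfold realExpectedScore; fun_prop
  filter_upwards [nhdsWithin_le_nhds ((hcx.tendsto p).eventually (gt_mem_nhds hxa)),
    self_mem_nhdsWithin] with y hy hyI
  exact (entropy_le_realExpectedScore hs hyI (Ioo_subset_Icc_self hx)
    (expectedScore_ne_top hs hyI (Or.inl hx))).trans_lt hy

end RealLine

variable {n : ℕ}

def unitCube (n : ℕ) : Set (Fin n → ℝ) := univ.pi fun _ => Icc 0 1

def cubeVertices (n : ℕ) : Set (Fin n → ℝ) := univ.pi fun _ => {0, 1}

noncomputable def totalScore (s : Fin 2 → ℝ → ℝ≥0∞) (x q : Fin n → ℝ) : ℝ≥0∞ :=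
  ∑ i, expectedScore s (x i) (q i)

noncomputable def divergence (s : Fin 2 → ℝ → ℝ≥0∞) (f q : Fin n → ℝ) : ℝ :=
  ∑ i, (realExpectedScore s (f i) (q i) - entropy s (q i))

def IsInner (V : Set (Fin n → ℝ)) (p : Fin n → ℝ) : Prop :=
  ∀ i, p i ∈ Ioo (0:ℝ) 1 ∨ ∀ v ∈ V, v i = p i

variable {V K : Set (Fin n → ℝ)} {f c p q π u : Fin n → ℝ}

lemma mem_unitCube : q ∈ unitCube n ↔ ∀ i, q i ∈ Icc (0:ℝ) 1 := mem_univ_pi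

lemma cubeVertices_subset_unitCube : cubeVertices n ⊆ unitCube n :=
  pi_mono fun _ _ => by simp [insert_subset_iff]

lemma finite_cubeVertices : (cubeVertices n).Finite := Set.Finite.pi fun _ => toFinite _

lemma convex_unitCube : Convex ℝ (unitCube n) := convex_pi fun _ _ => convex_Icc 0 1

lemma convexHull_subset_unitCube (hV : V ⊆ unitCube n) : convexHull ℝ V ⊆ unitCube n :=
  convexHull_min hV convex_unitCube

lemma eq_of_mem_convexHull {i : Fin n} {a : ℝ} (h : ∀ v ∈ V, v i = a)
    (hq : q ∈ convexHull ℝ V) : q i = a :=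
  convexHull_min h
    (convex_hyperplane (LinearMap.proj (R := ℝ) (φ := fun _ : Fin n => ℝ) i).isLinear a) hq

lemma IsInner.mono (hp : IsInner V p) (hKV : K ⊆ V) : IsInner K p :=
  fun i => (hp i).imp_right fun hc q hq => hc q (hKV hq)

lemma isInner_convexHull : IsInner (convexHull ℝ V) p ↔ IsInner V p :=
  ⟨fun hp => hp.mono (subset_convexHull ℝ V),
    fun hp i => (hp i).imp_right fun hc _ hq => eq_of_mem_convexHull hc hq⟩

lemma IsInner.smul_add_smul (hV : V ⊆ unitCube n) (hc : IsInner V c)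
    (hq : q ∈ convexHull ℝ V) {η : ℝ} (hη : η ∈ Ioc (0:ℝ) 1) : IsInner V ((1 - η) • q + η • c) := by
  intro i
  simp only [Pi.add_apply, Pi.smul_apply, smul_eq_mul]
  rcases hc i with hci | hconst
  · have hqi := (mem_unitCube.1 (convexHull_subset_unitCube hV hq)) i
    left
    constructor <;> nlinarith [hη.1, hη.2, hqi.1, hqi.2, hci.1, hci.2]
  · right
    rw [eq_of_mem_convexHull hconst hq]
    intro v hv
    rw [hconst v hv]; ring

lemma IsInner.expectedScore_ne_top (hs : IsStrictlyProper s) (hV : V ⊆ unitCube n)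
    (hp : IsInner V p) (hq : q ∈ convexHull ℝ V) (i : Fin n) :
    expectedScore s (p i) (q i) ≠ ⊤ :=
  ScoringRule.expectedScore_ne_top hs (mem_unitCube.1 (convexHull_subset_unitCube hV hq) i)
    ((hp i).imp_right fun hc => (eq_of_mem_convexHull hc hq).symm)

lemma IsInner.totalScore_ne_top (hs : IsStrictlyProper s) (hV : V ⊆ unitCube n)
    (hp : IsInner V p) (hq : q ∈ convexHull ℝ V) : totalScore s p q ≠ ⊤ :=
  ENNReal.sum_ne_top.2 fun i _ => hp.expectedScore_ne_top hs hV hq i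

lemma exists_isInner_mem_convexHull (hV : V ⊆ cubeVertices n) (hne : V.Nonempty) :
    ∃ c ∈ convexHull ℝ V, IsInner V c := by
  classical
  have hfin : V.Finite := finite_cubeVertices.subset hV
  set F := hfin.toFinset
  have hcard : (0:ℝ) < F.card := by exact_mod_cast Finset.card_pos.2 (hfin.toFinset_nonempty.2 hne)
  have hw : ∑ _v ∈ F, 1 / (F.card : ℝ) = 1 := by
    rw [Finset.sum_const, nsmul_eq_mul]; field_simp
  refine ⟨∑ v ∈ F, (1 / (F.card : ℝ)) • v,
    (convex_convexHull ℝ V).sum_mem (fun _ _ => by positivity) hw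
      fun v hv => subset_convexHull ℝ V (hfin.mem_toFinset.1 hv), fun i => ?_⟩
  have hbin : ∀ v ∈ F, v i = 0 ∨ v i = 1 := fun v hv => by
    simpa using hV (hfin.mem_toFinset.1 hv) i trivial
  simp only [Finset.sum_apply, Pi.smul_apply, smul_eq_mul]
  by_cases h0 : ∀ v ∈ F, v i = 0
  · right
    intro v hv
    rw [Finset.sum_congr rfl fun w hw => by rw [h0 w hw], h0 v (hfin.mem_toFinset.2 hv)]
    simp
  by_cases h1 : ∀ v ∈ F, v i = 1
  · right
    intro v hv
    rw [Finset.sum_congr rfl fun w hw => by rw [h1 w hw], h1 v (hfin.mem_toFinset.2 hv), mul_one,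
      hw]
  push Not at h0 h1
  obtain ⟨v₁, hv₁, hv₁i⟩ := h0
  obtain ⟨v₀, hv₀, hv₀i⟩ := h1
  left
  constructor
  · refine Finset.sum_pos' (fun v hv => ?_) ⟨v₁, hv₁, ?_⟩
    · rcases hbin v hv with h | h <;> rw [h] <;> positivity
    · rw [(hbin v₁ hv₁).resolve_left hv₁i]; positivity
  · calc ∑ v ∈ F, 1 / (F.card : ℝ) * v i < ∑ v ∈ F, 1 / (F.card : ℝ) := by
          refine Finset.sum_lt_sum (fun v hv => ?_) ⟨v₀, hv₀, ?_⟩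
          · rcases hbin v hv with h | h <;> rw [h] <;> simp
          · rw [(hbin v₀ hv₀).resolve_right hv₀i]; simp [hcard]
      _ = 1 := hw

lemma expectedScore_add {a b q₁ q₂ : ℝ} (x : ℝ) (ha : 0 ≤ a) (hb : 0 ≤ b) (hab : a + b = 1)
    (hq₁ : q₁ ∈ Icc (0:ℝ) 1) (hq₂ : q₂ ∈ Icc (0:ℝ) 1) :
    expectedScore s x (a * q₁ + b * q₂) =
      ENNReal.ofReal a * expectedScore s x q₁ + ENNReal.ofReal b * expectedScore s x q₂ := by
  have hcompl : 1 - (a * q₁ + b * q₂) = a * (1 - q₁) + b * (1 - q₂) := by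
    linear_combination -hab
  have hq₁' := sub_nonneg.2 hq₁.2
  have hq₂' := sub_nonneg.2 hq₂.2
  rw [expectedScore, expectedScore, expectedScore, hcompl,
    ENNReal.ofReal_add (mul_nonneg ha hq₁.1) (mul_nonneg hb hq₂.1),
    ENNReal.ofReal_add (mul_nonneg ha hq₁') (mul_nonneg hb hq₂'),
    ENNReal.ofReal_mul ha, ENNReal.ofReal_mul hb, ENNReal.ofReal_mul ha, ENNReal.ofReal_mul hb]
  ring

lemma convex_totalScore_ne_top (f : Fin n → ℝ) :
    Convex ℝ {q | q ∈ unitCube n ∧ totalScore s f q ≠ ⊤} := by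
  rintro q₁ ⟨hq₁, hfin₁⟩ q₂ ⟨hq₂, hfin₂⟩ a b ha hb hab
  refine ⟨convex_unitCube hq₁ hq₂ ha hb hab, ?_⟩
  have hsplit : totalScore s f (a • q₁ + b • q₂) =
      ENNReal.ofReal a * totalScore s f q₁ + ENNReal.ofReal b * totalScore s f q₂ := by
    simp only [totalScore, Finset.mul_sum, ← Finset.sum_add_distrib, Pi.add_apply, Pi.smul_apply,
      smul_eq_mul]
    exact Finset.sum_congr rfl fun i _ =>
      expectedScore_add _ ha hb hab (mem_unitCube.1 hq₁ i) (mem_unitCube.1 hq₂ i)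
  rw [hsplit]
  exact ENNReal.add_ne_top.2 ⟨ENNReal.mul_ne_top ENNReal.ofReal_ne_top hfin₁,
    ENNReal.mul_ne_top ENNReal.ofReal_ne_top hfin₂⟩

lemma toReal_totalScore (hq : q ∈ unitCube n) (h : totalScore s f q ≠ ⊤) :
    (totalScore s f q).toReal = ∑ i, realExpectedScore s (f i) (q i) := by
  have h' := ENNReal.sum_ne_top.1 h
  rw [totalScore, ENNReal.toReal_sum h']
  exact Finset.sum_congr rfl fun i hi => toReal_expectedScore (mem_unitCube.1 hq i) (h' i hi)

lemma divergence_pos (hs : IsStrictlyProper s) (hf : f ∈ unitCube n) (hq : q ∈ unitCube n)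
    (hfin : totalScore s f q ≠ ⊤) (hne : q ≠ f) : 0 < divergence s f q := by
  have hfin' := ENNReal.sum_ne_top.1 hfin
  obtain ⟨i, hi⟩ := Function.ne_iff.1 hne
  refine Finset.sum_pos' (fun j hj => sub_nonneg.2 ?_) ⟨i, Finset.mem_univ i, sub_pos.2 ?_⟩
  · exact entropy_le_realExpectedScore hs (mem_unitCube.1 hq j) (mem_unitCube.1 hf j) (hfin' j hj)
  · exact entropy_lt_realExpectedScore hs (mem_unitCube.1 hq i) (mem_unitCube.1 hf i) (Ne.symm hi)
      (hfin' i (Finset.mem_univ i))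

lemma lowerSemicontinuousOn_divergence (hs : IsStrictlyProper s)
    (hcont : ∀ k, ContinuousOn (s k) (Icc 0 1)) (f : Fin n → ℝ) :
    LowerSemicontinuousOn (divergence s f) (unitCube n) := by
  refine lowerSemicontinuousOn_sum fun i _ => ?_
  simp only [sub_eq_add_neg]
  have hscore : Continuous fun q : Fin n → ℝ => realExpectedScore s (f i) (q i) := by
    unfold realExpectedScore; fun_prop
  have hentropy : UpperSemicontinuousOn (fun q : Fin n → ℝ => entropy s (q i)) (unitCube n) :=
    (upperSemicontinuousOn_entropy hs hcont).comp (continuous_apply i).continuousOn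
      fun q hq => mem_unitCube.1 hq i
  exact hscore.continuousOn.lowerSemicontinuousOn.add
    (continuous_neg.comp_upperSemicontinuousOn_antitone hentropy fun _ _ h => neg_le_neg h)

section Minimizer

variable (hs : IsStrictlyProper s) (hcont : ∀ k, ContinuousOn (s k) (Icc 0 1))
  (hK : Convex ℝ K) (hKcube : K ⊆ unitCube n) (hπ : π ∈ K) (hmin : IsMinOn (divergence s f) K π)
  (hinner : IsInner K π) (hu : u ∈ K)
include hs hcont hK hKcube hπ hmin hinner hu

/-- Along the segment from `π` to `u`, the supporting lines of the concave `entropy s` bound the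
increment of `divergence s f`; let the step length tend to `0`. -/
lemma sum_mul_scoreSlope_le_of_isMinOn :
    ∑ i, (u i - π i) * scoreSlope s (π i) ≤ ∑ i, (u i - π i) * scoreSlope s (f i) := by
  have hcoord : ∀ (t : ℝ) i, (π + t • (u - π)) i = π i + t * (u i - π i) := fun _ _ => rfl
  have hstep : ∀ t ∈ Ioo (0:ℝ) 1, ∑ i, (u i - π i) * scoreSlope s (π i + t * (u i - π i)) ≤
      ∑ i, (u i - π i) * scoreSlope s (f i) := by
    intro t ht
    have hmem : π + t • (u - π) ∈ K := hK.add_smul_sub_mem hπ hu (Ioo_subset_Icc_self ht)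
    have hentropy : ∀ i, t * ((u i - π i) * scoreSlope s (π i + t * (u i - π i))) ≤
        entropy s (π i + t * (u i - π i)) - entropy s (π i) := by
      intro i
      have hπi := mem_unitCube.1 (hKcube hπ) i
      have hui := mem_unitCube.1 (hKcube hu) i
      have hfin : expectedScore s (π i + t * (u i - π i)) (π i) ≠ ⊤ := by
        refine expectedScore_ne_top hs hπi ?_
        rcases hinner i with hπi' | hconst
        · left
          constructor <;> nlinarith [mul_pos (sub_pos.2 ht.2) hπi'.1,
            mul_pos (sub_pos.2 ht.2) (sub_pos.2 hπi'.2), mul_nonneg ht.1.le hui.1,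
            mul_nonneg ht.1.le (sub_nonneg.2 hui.2)]
        · right; rw [hconst u hu]; ring
      have h := entropy_le_entropy_add hs hπi
        (by rw [← hcoord]; exact mem_unitCube.1 (hKcube hmem) i) hfin
      linarith
    have hincr : divergence s f (π + t • (u - π)) - divergence s f π =
        ∑ i, (t * ((u i - π i) * scoreSlope s (f i)) -
          (entropy s (π i + t * (u i - π i)) - entropy s (π i))) := by
      rw [divergence, divergence, ← Finset.sum_sub_distrib]
      refine Finset.sum_congr rfl fun i _ => ?_
      rw [hcoord]; simp only [realExpectedScore_eq]; ring
    have hle : 0 ≤ t * (∑ i, (u i - π i) * scoreSlope s (f i) -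
        ∑ i, (u i - π i) * scoreSlope s (π i + t * (u i - π i))) := by
      rw [mul_sub, Finset.mul_sum, Finset.mul_sum, ← Finset.sum_sub_distrib]
      calc (0:ℝ) ≤ divergence s f (π + t • (u - π)) - divergence s f π :=
            sub_nonneg.2 (isMinOn_iff.1 hmin _ hmem)
        _ ≤ _ := by rw [hincr]; exact Finset.sum_le_sum fun i _ => by linarith [hentropy i]
    nlinarith [ht.1]
  have hlim : Tendsto (fun t => ∑ i, (u i - π i) * scoreSlope s (π i + t * (u i - π i)))
      (𝓝[>] 0) (𝓝 (∑ i, (u i - π i) * scoreSlope s (π i))) := by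
    refine tendsto_finsetSum _ fun i _ => ?_
    rcases hinner i with hπi | hconst
    · have hslope : ContinuousAt (scoreSlope s) (π i) :=
        (continuousAt_score hs hcont hπi 1).sub (continuousAt_score hs hcont hπi 0)
      have hpath : ContinuousAt (fun t : ℝ => π i + t * (u i - π i)) 0 := by fun_prop
      have h : ContinuousAt (fun t => (u i - π i) * scoreSlope s (π i + t * (u i - π i))) 0 :=
        continuousAt_const.mul (hslope.comp_of_eq hpath (by simp))
      simpa using h.tendsto.mono_left nhdsWithin_le_nhds
    · simp [hconst u hu]
  exact le_of_tendsto hlim (eventually_of_mem (Ioo_mem_nhdsGT one_pos) hstep)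

/-- The generalised Pythagorean inequality for the Bregman divergence of `s`. -/
lemma divergence_le_of_isMinOn :
    divergence s f π ≤
      ∑ i, (realExpectedScore s (f i) (u i) - realExpectedScore s (π i) (u i)) := by
  have h := sum_mul_scoreSlope_le_of_isMinOn hs hcont hK hKcube hπ hmin hinner hu
  have hsplit : ∑ i, (realExpectedScore s (f i) (u i) - realExpectedScore s (π i) (u i)) =
      divergence s f π + (∑ i, (u i - π i) * scoreSlope s (f i) -
        ∑ i, (u i - π i) * scoreSlope s (π i)) := by
    rw [divergence, ← Finset.sum_sub_distrib, ← Finset.sum_add_distrib]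
    refine Finset.sum_congr rfl fun i _ => ?_
    simp only [entropy, realExpectedScore_eq]; ring
  linarith

end Minimizer

lemma exists_pos_le_divergence (hs : IsStrictlyProper s)
    (hcont : ∀ k, ContinuousOn (s k) (Icc 0 1)) {W : Set (Fin n → ℝ)} (hW : W ⊆ cubeVertices n)
    (hWne : W.Nonempty) (hf : f ∈ unitCube n) (hfW : f ∉ convexHull ℝ W)
    (hfin : ∀ w ∈ W, totalScore s f w ≠ ⊤) :
    ∃ δ > 0, ∀ q ∈ convexHull ℝ W, δ ≤ divergence s f q := by
  have hWcube : W ⊆ unitCube n := hW.trans cubeVertices_subset_unitCube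
  have hCcube := convexHull_subset_unitCube hWcube
  obtain ⟨π, hπ, hπmin⟩ :=
    ((lowerSemicontinuousOn_divergence hs hcont f).mono hCcube).exists_isMinOn hWne.convexHull
      ((finite_cubeVertices.subset hW).isCompact_convexHull ℝ)
  have hCfin : convexHull ℝ W ⊆ {q | q ∈ unitCube n ∧ totalScore s f q ≠ ⊤} :=
    convexHull_min (fun w hw => ⟨hWcube hw, hfin w hw⟩) (convex_totalScore_ne_top f)
  exact ⟨_, divergence_pos hs hf (hCcube hπ) (hCfin hπ).2 (ne_of_mem_of_not_mem hπ hfW),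
    isMinOn_iff.1 hπmin⟩

/-- Minimising over the hull of `W` shrunk towards the inner point `c` yields an inner minimiser,
to which the Pythagorean inequality applies. -/
lemma exists_isInner_divergence_le (hs : IsStrictlyProper s)
    (hcont : ∀ k, ContinuousOn (s k) (Icc 0 1)) {W : Set (Fin n → ℝ)} (hW : W ⊆ cubeVertices n)
    (hWne : W.Nonempty) (hc : IsInner W c) (hcW : c ∈ convexHull ℝ W) {ε : ℝ}
    (hε : ε ∈ Ioc (0:ℝ) 1) (f : Fin n → ℝ) :
    ∃ π ∈ convexHull ℝ W, IsInner W π ∧ ∀ w ∈ W, divergence s f π ≤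
      (1 - ε) * ∑ i, (realExpectedScore s (f i) (w i) - realExpectedScore s (π i) (w i)) +
        ε * ∑ i, (realExpectedScore s (f i) (c i) - realExpectedScore s (π i) (c i)) := by
  set C := convexHull ℝ W
  have hWcube : W ⊆ unitCube n := hW.trans cubeVertices_subset_unitCube
  set h := AffineMap.homothety c (1 - ε)
  have hh : ∀ q, h q = (1 - ε) • q + ε • c := fun q => by
    rw [AffineMap.homothety_apply]; simp only [vsub_eq_sub, vadd_eq_add]; module
  have hKC : h '' C ⊆ C := image_subset_iff.2 fun q hq => by
    rw [mem_preimage, hh]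
    exact convex_convexHull ℝ W hq hcW (by linarith [hε.2]) hε.1.le (by ring)
  have hKinner : ∀ q ∈ h '' C, IsInner W q := by
    rintro _ ⟨q, hq, rfl⟩
    rw [hh]
    exact hc.smul_add_smul hWcube hq hε
  obtain ⟨π, hπK, hπmin⟩ :=
    ((lowerSemicontinuousOn_divergence hs hcont f).mono ((hKC.trans
      (convexHull_subset_unitCube hWcube)))).exists_isMinOn (hWne.convexHull.image h)
      (((finite_cubeVertices.subset hW).isCompact_convexHull ℝ).image
        h.continuous_of_finiteDimensional)
  refine ⟨π, hKC hπK, hKinner π hπK, fun w hw => ?_⟩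
  have hpyth := divergence_le_of_isMinOn hs hcont ((convex_convexHull ℝ W).affine_image h)
    (hKC.trans (convexHull_subset_unitCube hWcube)) hπK hπmin
    ((isInner_convexHull.2 (hKinner π hπK)).mono hKC)
    (mem_image_of_mem h (subset_convexHull ℝ W hw))
  refine hpyth.trans_eq ?_
  rw [Finset.mul_sum, Finset.mul_sum, ← Finset.sum_add_distrib]
  refine Finset.sum_congr rfl fun i _ => ?_
  simp only [hh, Pi.add_apply, Pi.smul_apply, smul_eq_mul, realExpectedScore_eq]; ring

theorem exists_lt_totalScore_of_ne_top (hs : IsStrictlyProper s)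
    (hcont : ∀ k, ContinuousOn (s k) (Icc 0 1)) {W : Set (Fin n → ℝ)} (hW : W ⊆ cubeVertices n)
    (hWne : W.Nonempty) (hf : f ∈ unitCube n) (hfW : f ∉ convexHull ℝ W)
    (hfin : ∀ w ∈ W, totalScore s f w ≠ ⊤) :
    ∃ π ∈ convexHull ℝ W, ∀ w ∈ W, totalScore s π w < totalScore s f w := by
  have hWcube : W ⊆ unitCube n := hW.trans cubeVertices_subset_unitCube
  obtain ⟨δ, hδ, hδle⟩ := exists_pos_le_divergence hs hcont hW hWne hf hfW hfin
  obtain ⟨c, hcW, hc⟩ := exists_isInner_mem_convexHull hW hWne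
  obtain ⟨ε, hεδ, hε⟩ : ∃ ε, ε * divergence s f c < δ ∧ ε ∈ Ioc (0:ℝ) 1 :=
    ((((continuous_mul_const _).tendsto' 0 0 (zero_mul _)).eventually (gt_mem_nhds hδ)).filter_mono
      nhdsWithin_le_nhds |>.and (Ioc_mem_nhdsGT one_pos)).exists
  obtain ⟨π, hπW, hπinner, hπ⟩ :=
    exists_isInner_divergence_le hs hcont hW hWne hc hcW hε f
  refine ⟨π, hπW, fun w hw => ?_⟩
  have hwW : w ∈ convexHull ℝ W := subset_convexHull ℝ W hw
  have hc_le : ∑ i, (realExpectedScore s (f i) (c i) - realExpectedScore s (π i) (c i)) ≤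
      divergence s f c := Finset.sum_le_sum fun i _ => by
    have hCcube := convexHull_subset_unitCube hWcube
    linarith [entropy_le_realExpectedScore hs (mem_unitCube.1 (hCcube hcW) i)
      (mem_unitCube.1 (hCcube hπW) i) (hπinner.expectedScore_ne_top hs hWcube hcW i)]
  have hgap : 0 < ∑ i, (realExpectedScore s (f i) (w i) - realExpectedScore s (π i) (w i)) := by
    by_contra! hneg
    nlinarith [hδle π hπW, hπ w hw, mul_le_mul_of_nonneg_left hc_le hε.1.le,
      mul_nonneg (sub_nonneg.2 hε.2) (neg_nonneg.2 hneg)]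
  have hπfin := hπinner.totalScore_ne_top hs hWcube hwW
  rw [← ENNReal.toReal_lt_toReal hπfin (hfin w hw), toReal_totalScore (hWcube hw) hπfin,
    toReal_totalScore (hWcube hw) (hfin w hw)]
  rw [Finset.sum_sub_distrib] at hgap
  linarith

lemma continuousOn_totalScore (hcont : ∀ k, ContinuousOn (s k) (Icc 0 1)) (q : Fin n → ℝ) :
    ContinuousOn (fun x => totalScore s x q) (unitCube n) :=
  continuousOn_finsetSum _ fun i _ => (continuousOn_expectedScore hcont (q i)).comp
    (continuous_apply i).continuousOn fun _ hx => mem_unitCube.1 hx i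

theorem exists_lt_totalScore (hs : IsStrictlyProper s) (hcont : ∀ k, ContinuousOn (s k) (Icc 0 1))
    (hV : V ⊆ cubeVertices n) (hVne : V.Nonempty) (hf : f ∈ unitCube n)
    (hfV : f ∉ convexHull ℝ V) :
    ∃ p ∈ convexHull ℝ V, ∀ v ∈ V, totalScore s p v < totalScore s f v := by
  have hVcube := hV.trans cubeVertices_subset_unitCube
  set W := {v ∈ V | totalScore s f v ≠ ⊤}
  obtain ⟨c, hcV, hc⟩ := exists_isInner_mem_convexHull hV hVne
  obtain ⟨π, hπV, hπW⟩ : ∃ π ∈ convexHull ℝ V, ∀ w ∈ W, totalScore s π w < totalScore s f w := by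
    rcases W.eq_empty_or_nonempty with hW | hW
    · exact ⟨c, hcV, by simp [hW]⟩
    · have hWV : convexHull ℝ W ⊆ convexHull ℝ V := convexHull_mono (sep_subset V _)
      obtain ⟨π, hπ, hlt⟩ := exists_lt_totalScore_of_ne_top hs hcont ((sep_subset V _).trans hV)
        hW hf (fun h => hfV (hWV h)) fun w hw => hw.2
      exact ⟨π, hWV hπ, hlt⟩
  -- Moving `π` slightly towards `c` makes the scores at all vertices finite.
  set p : ℝ → Fin n → ℝ := fun η => (1 - η) • π + η • c
  have hpV : ∀ η ∈ Ioc (0:ℝ) 1, p η ∈ convexHull ℝ V := fun η hη =>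
    convex_convexHull ℝ V hπV hcV (by linarith [hη.2]) hη.1.le (by ring)
  have hp : Tendsto p (𝓝[>] 0) (𝓝[unitCube n] π) := by
    refine tendsto_nhdsWithin_iff.2 ⟨?_, eventually_of_mem (Ioc_mem_nhdsGT one_pos)
      fun η hη => convexHull_subset_unitCube hVcube (hpV η hη)⟩
    have : Continuous p := by fun_prop
    simpa [p] using (this.tendsto 0).mono_left nhdsWithin_le_nhds
  have hev : ∀ᶠ η in 𝓝[>] 0, ∀ w ∈ W, totalScore s (p η) w < totalScore s f w :=
    ((finite_cubeVertices.subset hV).subset (sep_subset V _)).eventually_all.2 fun w hw =>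
      ((continuousOn_totalScore hcont w π (convexHull_subset_unitCube hVcube hπV)).tendsto.comp
        hp).eventually (gt_mem_nhds (hπW w hw))
  obtain ⟨η, hηW, hη⟩ := (hev.and (Ioc_mem_nhdsGT one_pos)).exists
  refine ⟨p η, hpV η hη, fun v hv => ?_⟩
  by_cases hfv : totalScore s f v = ⊤
  · rw [hfv, lt_top_iff_ne_top]
    exact (hc.smul_add_smul hVcube hπV hη).totalScore_ne_top hs hVcube (subset_convexHull ℝ V hv)
  · exact hηW v ⟨hv, hfv⟩

section Coherence

variable {Ω : Type*} {E : Fin n → Set Ω}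

noncomputable def truthVector (E : Fin n → Set Ω) (ω : Ω) : Fin n → ℝ :=
  fun i => (E i).indicator 1 ω

noncomputable def penalty (s : Fin 2 → ℝ → ℝ≥0∞) (E : Fin n → Set Ω) (g : Fin n → ℝ) (ω : Ω) :
    ℝ≥0∞ :=
  ∑ i, s ((E i).indicator (fun _ => 1) ω) (g i)

lemma truthVector_mem_cubeVertices (ω : Ω) : truthVector E ω ∈ cubeVertices n := fun i _ => by
  by_cases h : ω ∈ E i <;> simp [truthVector, h]

lemma penalty_eq_totalScore (g : Fin n → ℝ) (ω : Ω) :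
    penalty s E g ω = totalScore s g (truthVector E ω) :=
  Finset.sum_congr rfl fun i _ => by
    by_cases h : ω ∈ E i <;> simp [truthVector, h, expectedScore_zero, expectedScore_one]

variable [MeasurableSpace Ω]

def IsCoherent (E : Fin n → Set Ω) (p : Fin n → ℝ) : Prop :=
  ∃ μ : Measure Ω, IsProbabilityMeasure μ ∧ ∀ i, p i = (μ (E i)).toReal

lemma isCoherent_truthVector (hE : ∀ i, MeasurableSet (E i)) (ω : Ω) :
    IsCoherent E (truthVector E ω) :=
  ⟨Measure.dirac ω, inferInstance, fun i => by
    by_cases h : ω ∈ E i <;> simp [truthVector, Measure.dirac_apply' ω (hE i), h]⟩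

lemma convex_isCoherent : Convex ℝ {p | IsCoherent E p} := by
  rintro p ⟨μ, hμ, hp⟩ q ⟨ν, hν, hq⟩ a b ha hb hab
  refine ⟨ENNReal.ofReal a • μ + ENNReal.ofReal b • ν, ⟨?_⟩, fun i => ?_⟩
  · simp [← ENNReal.ofReal_add ha hb, hab]
  · simp [hp i, hq i, ENNReal.toReal_add, ENNReal.mul_ne_top, ha, hb]

lemma IsCoherent.mem_unitCube {p : Fin n → ℝ} (hp : IsCoherent E p) : p ∈ unitCube n := by
  obtain ⟨μ, hμ, hp⟩ := hp
  exact ScoringRule.mem_unitCube.2 fun i => hp i ▸ ⟨ENNReal.toReal_nonneg,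
    ENNReal.toReal_le_of_le_ofReal zero_le_one (ENNReal.ofReal_one ▸ prob_le_one)⟩

lemma convexHull_range_truthVector_subset (hE : ∀ i, MeasurableSet (E i)) :
    convexHull ℝ (range (truthVector E)) ⊆ {p | IsCoherent E p} :=
  convexHull_min (range_subset_iff.2 (isCoherent_truthVector hE)) convex_isCoherent

lemma lintegral_penalty (hE : ∀ i, MeasurableSet (E i)) (μ : Measure Ω) [IsProbabilityMeasure μ]
    (g : Fin n → ℝ) :
    ∫⁻ ω, penalty s E g ω ∂μ = totalScore s g fun i => (μ (E i)).toReal := by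
  unfold penalty
  have hmeas : ∀ i, Measurable fun ω => s ((E i).indicator (fun _ => 1) ω) (g i) := fun i =>
    (Measurable.of_discrete (f := fun k => s k (g i))).comp (measurable_const.indicator (hE i))
  rw [lintegral_finsetSum _ fun i _ => hmeas i]
  refine Finset.sum_congr rfl fun i _ => ?_
  rw [← lintegral_add_compl _ (hE i),
    setLIntegral_congr_fun (hE i) fun ω hω => by rw [indicator_of_mem hω],
    setLIntegral_congr_fun (hE i).compl fun ω hω => by rw [indicator_of_notMem hω],
    setLIntegral_const, setLIntegral_const, prob_compl_eq_one_sub (hE i), expectedScore,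
    ENNReal.ofReal_sub _ ENNReal.toReal_nonneg, ENNReal.ofReal_toReal (measure_ne_top μ _)]
  simp [mul_comm]

lemma totalScore_self_lt (hs : IsStrictlyProper s) {f g : Fin n → ℝ} (hf : f ∈ unitCube n)
    (hg : g ∈ unitCube n) (hne : g ≠ f) : totalScore s f f < totalScore s g f := by
  obtain ⟨i, hi⟩ := Function.ne_iff.1 hne
  have hle : ∀ j, expectedScore s (f j) (f j) ≤ expectedScore s (g j) (f j) := fun j => by
    rcases eq_or_ne (g j) (f j) with h | h
    · rw [h]
    · exact (hs _ (mem_unitCube.1 hf j) _ (mem_unitCube.1 hg j) h).le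
  rw [totalScore, totalScore, ← Finset.add_sum_erase _ _ (Finset.mem_univ i),
    ← Finset.add_sum_erase _ _ (Finset.mem_univ i)]
  exact ENNReal.add_lt_add_of_lt_of_le
    (ENNReal.sum_ne_top.2 fun j _ => expectedScore_self_ne_top hs (mem_unitCube.1 hf j))
    (hs _ (mem_unitCube.1 hf i) _ (mem_unitCube.1 hg i) hi) (Finset.sum_le_sum fun j _ => hle j)

lemma IsCoherent.not_forall_penalty_le (hs : IsStrictlyProper s) (hE : ∀ i, MeasurableSet (E i))
    {f g : Fin n → ℝ} (hf : IsCoherent E f) (hg : g ∈ unitCube n) (hne : g ≠ f) :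
    ¬ ∀ ω, penalty s E g ω ≤ penalty s E f ω := by
  intro hdom
  have hlt := totalScore_self_lt hs hf.mem_unitCube hg hne
  obtain ⟨μ, hμ, hμf⟩ := hf
  have hμf' : (fun i => (μ (E i)).toReal) = f := funext fun i => (hμf i).symm
  have hint := lintegral_mono (μ := μ) hdom
  rw [lintegral_penalty hE, lintegral_penalty hE, hμf'] at hint
  exact hlt.not_ge hint

end Coherence

end ScoringRule

open ScoringRule

/-- Corollary: for any proper scoring rule, a forecast `f` is weakly
dominated by some forecast `g ≠ f` iff it is strongly dominated by some
coherent forecast. -/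
theorem stmt_19 {Ω : Type*} [MeasurableSpace Ω] [Nonempty Ω] {n : ℕ}
    (E : Fin n → Set Ω) (hE : ∀ i, MeasurableSet (E i))
    (s : Fin 2 → ℝ → ENNReal)
    (hproper : ∀ p ∈ Icc (0:ℝ) 1, ∀ x ∈ Icc (0:ℝ) 1, x ≠ p →
      ENNReal.ofReal p * s 1 p + ENNReal.ofReal (1 - p) * s 0 p <
      ENNReal.ofReal p * s 1 x + ENNReal.ofReal (1 - p) * s 0 x)
    (hcont : ∀ i : Fin 2, ContinuousOn (s i) (Icc (0:ℝ) 1))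
    (f : Fin n → ℝ) (hf : ∀ i, f i ∈ Icc (0:ℝ) 1) :
    (∃ g : Fin n → ℝ, (∀ i, g i ∈ Icc (0:ℝ) 1) ∧ g ≠ f ∧
      ∀ ω : Ω,
        (∑ i, s ((E i).indicator (fun _ => (1 : Fin 2)) ω) (g i)) ≤
        (∑ i, s ((E i).indicator (fun _ => (1 : Fin 2)) ω) (f i))) ↔
    (∃ g : Fin n → ℝ,
      (∃ μ : Measure Ω, IsProbabilityMeasure μ ∧ ∀ i, g i = (μ (E i)).toReal) ∧
      ∀ ω : Ω,
        (∑ i, s ((E i).indicator (fun _ => (1 : Fin 2)) ω) (g i)) <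
        (∑ i, s ((E i).indicator (fun _ => (1 : Fin 2)) ω) (f i))) := by
  have hV : range (truthVector E) ⊆ cubeVertices n :=
    range_subset_iff.2 truthVector_mem_cubeVertices
  constructor
  · rintro ⟨g, hg, hgf, hdom⟩
    have hfV : f ∉ convexHull ℝ (range (truthVector E)) := fun hfV =>
      IsCoherent.not_forall_penalty_le hproper hE (convexHull_range_truthVector_subset hE hfV)
        (mem_unitCube.2 hg) hgf hdom
    obtain ⟨p, hpV, hp⟩ :=
      exists_lt_totalScore hproper hcont hV (range_nonempty _) (mem_unitCube.2 hf) hfV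
    refine ⟨p, convexHull_range_truthVector_subset hE hpV, fun ω => ?_⟩
    calc penalty s E p ω = totalScore s p (truthVector E ω) := penalty_eq_totalScore p ω
      _ < totalScore s f (truthVector E ω) := hp _ (mem_range_self ω)
      _ = penalty s E f ω := (penalty_eq_totalScore f ω).symm
  · rintro ⟨g, hg, hdom⟩
    refine ⟨g, mem_unitCube.1 (IsCoherent.mem_unitCube (E := E) hg), ?_, fun ω => (hdom ω).le⟩
    rintro rfl
    exact (hdom (Classical.arbitrary Ω)).false
end
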